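/- arXiv:1701.02281 — 12 statements merged into one kernel-verified Lean document; each statement's English description precedes it below -/
import Mathlib

section
/- Define the matrix R, indexed by pairs of indices, with entries R_{μν}^{στ} := ℓ_{μν} δ_{μτ} δ_{νσ} + p_{μν} δ_{μ'τ} δ_{ν'σ} ∈ k. Then R is involutive: for all μ,ν,σ,τ ∈ {0,1,2,3} one has Σ_{α,β} R_{μν}^{αβ} R_{αβ}^{στ} = δ_{μσ} δ_{ντ}; that is, R² is the identity matrix on k¹⁶ (in particular R is invertible). -/
/-- For distinct `μ ν`, `pr μ ν = (μ', ν')`, the unique pair with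
`{μ', ν'} = {0,1,2,3} \ {μ, ν}` and `μ' > ν'` iff `μ > ν`; `pr μ μ = (μ, μ)`. -/
def pr : Fin 4 → Fin 4 → Fin 4 × Fin 4 :=
  ![![(0,0),(2,3),(1,3),(1,2)],
    ![(3,2),(1,1),(0,3),(0,2)],
    ![(3,1),(3,0),(2,2),(0,1)],
    ![(2,1),(2,0),(1,0),(3,3)]]

/-- The table `ν ↦ (ν̃, μ_ν, μ̃_ν)`. -/
def tnu : Fin 4 → Fin 4 × Fin 4 × Fin 4 :=
  ![(1,2,3),(0,3,2),(3,0,1),(2,1,0)]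

/-- The conditions on the parameters `ℓ_{μν}`, `p_{μν}` of Definition 2.1. -/
def GoodParams {k : Type*} [Field k] (ℓ p : Fin 4 → Fin 4 → k) : Prop :=
  (∀ μ : Fin 4, ℓ μ μ = 1) ∧
  (∀ μ ν : Fin 4, ℓ μ ν = ℓ ν μ) ∧
  (∀ μ ν : Fin 4, ℓ (pr μ ν).1 (pr μ ν).2 = ℓ μ ν) ∧
  (∀ μ ν : Fin 4, p μ ν = - p ν μ) ∧
  (∀ μ ν : Fin 4, ℓ μ ν ^ 2 + p μ ν * p (pr μ ν).2 (pr μ ν).1 = 1)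

/-- `x` satisfies the `A_{ℓ,p}`-relations: `x_μ x_ν = ℓ_{μν} x_ν x_μ + p_{μν} x_{ν'} x_{μ'}`. -/
def AlpRel {k A : Type*} [Field k] [Ring A] [Algebra k A]
    (ℓ p : Fin 4 → Fin 4 → k) (x : Fin 4 → A) : Prop :=
  ∀ μ ν : Fin 4,
    x μ * x ν = ℓ μ ν • (x ν * x μ) + p μ ν • (x (pr μ ν).2 * x (pr μ ν).1)

/-- The matrix `R_{μν}^{στ} := ℓ_{μν} δ_{μτ} δ_{νσ} + p_{μν} δ_{μ'τ} δ_{ν'σ}`. -/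
def Rmat {k : Type*} [Field k] (ℓ p : Fin 4 → Fin 4 → k)
    (μ ν σ τ : Fin 4) : k :=
  ℓ μ ν * (if μ = τ then 1 else 0) * (if ν = σ then 1 else 0) +
    p μ ν * (if (pr μ ν).1 = τ then 1 else 0) * (if (pr μ ν).2 = σ then 1 else 0)

/-!
Row `(μ, ν)` of `R` is `ℓ_{μν}` in column `(ν, μ)` plus `p_{μν}` in
column `(ν', μ')`. The pair complementary to `(ν, μ)` is `(ν', μ')` and the one complementary to
`(ν', μ')` is `(ν, μ)`, so row `(μ, ν)` of `R²` is `ℓ_{μν}² + p_{μν} p_{ν'μ'}` in column `(μ, ν)`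
and `ℓ_{μν} (p_{νμ} + p_{μν})` in column `(μ', ν')`; these are `1` and `0`.
-/

theorem Matrix.of_prod_mul_self_eq_one {m n R : Type*} [Fintype m] [Fintype n]
    [DecidableEq m] [DecidableEq n] [NonAssocSemiring R] (T : m → n → m → n → R)
    (hT : ∀ a b c d, ∑ α, ∑ β, T a b α β * T α β c d =
      (if a = c then (1 : R) else 0) * (if b = d then 1 else 0)) :
    (Matrix.of fun q r : m × n => T q.1 q.2 r.1 r.2) *
      (Matrix.of fun q r : m × n => T q.1 q.2 r.1 r.2) = 1 := by
  ext ⟨a, b⟩ ⟨c, d⟩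
  rw [Matrix.mul_apply, Fintype.sum_prod_type]
  simp only [Matrix.of_apply, hT, Matrix.one_apply, Prod.ext_iff, ite_zero_mul_ite_zero, mul_one]

theorem pr_swap (μ ν : Fin 4) : pr ν μ = ((pr μ ν).2, (pr μ ν).1) := by
  revert μ ν; decide

theorem pr_pr (μ ν : Fin 4) : pr (pr μ ν).1 (pr μ ν).2 = (μ, ν) := by
  revert μ ν; decide

section Rmat

variable {k : Type*} [Field k] (ℓ p : Fin 4 → Fin 4 → k)

theorem sum_Rmat_mul (μ ν : Fin 4) (f : Fin 4 → Fin 4 → k) :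
    ∑ α, ∑ β, Rmat ℓ p μ ν α β * f α β =
      ℓ μ ν * f ν μ + p μ ν * f (pr μ ν).2 (pr μ ν).1 := by
  simp [Rmat, add_mul, Finset.sum_add_distrib, ite_mul]

theorem Rmat_mul_Rmat (hlp : GoodParams ℓ p) (μ ν σ τ : Fin 4) :
    ∑ α, ∑ β, Rmat ℓ p μ ν α β * Rmat ℓ p α β σ τ =
      (if μ = σ then (1 : k) else 0) * (if ν = τ then 1 else 0) := by
  obtain ⟨-, hℓ_symm, hℓ_pr, hp_antisymm, hℓp⟩ := hlp
  have hℓ_pr_swap : ℓ (pr μ ν).2 (pr μ ν).1 = ℓ μ ν := by rw [hℓ_symm, hℓ_pr]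
  have hpr_pr_swap : pr (pr μ ν).2 (pr μ ν).1 = (ν, μ) := by rw [pr_swap, pr_pr]
  rw [sum_Rmat_mul]
  simp only [Rmat, pr_swap μ ν, hpr_pr_swap, hℓ_symm ν μ, hℓ_pr_swap, hp_antisymm ν μ]
  linear_combination
    ((if μ = σ then (1 : k) else 0) * (if ν = τ then (1 : k) else 0)) * hℓp μ ν

end Rmat

theorem stmt1_general {k : Type*} [Field k]
    (ℓ p : Fin 4 → Fin 4 → k) (hlp : GoodParams ℓ p) :
    (∀ μ ν σ τ : Fin 4,
      ∑ α : Fin 4, ∑ β : Fin 4, Rmat ℓ p μ ν α β * Rmat ℓ p α β σ τ =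
        (if μ = σ then (1 : k) else 0) * (if ν = τ then 1 else 0)) ∧
    ((Matrix.of fun q r : Fin 4 × Fin 4 => Rmat ℓ p q.1 q.2 r.1 r.2) *
      (Matrix.of fun q r : Fin 4 × Fin 4 => Rmat ℓ p q.1 q.2 r.1 r.2) = 1) ∧
    IsUnit (Matrix.of fun q r : Fin 4 × Fin 4 => Rmat ℓ p q.1 q.2 r.1 r.2) := by
  have hsq := Matrix.of_prod_mul_self_eq_one _ (Rmat_mul_Rmat ℓ p hlp)
  exact ⟨Rmat_mul_Rmat ℓ p hlp, hsq, ⟨⟨_, _, hsq, hsq⟩, rfl⟩⟩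

/-- `R` is involutive, `Σ_{α,β} R_{μν}^{αβ} R_{αβ}^{στ} = δ_{μσ} δ_{ντ}`;
that is, `R² = 1` as a matrix on `k¹⁶` (in particular `R` is invertible). -/
theorem stmt1 {k : Type*} [Field k] [CharZero k]
    (ℓ p : Fin 4 → Fin 4 → k) (hlp : GoodParams ℓ p) :
    (∀ μ ν σ τ : Fin 4,
      ∑ α : Fin 4, ∑ β : Fin 4, Rmat ℓ p μ ν α β * Rmat ℓ p α β σ τ =
        (if μ = σ then (1 : k) else 0) * (if ν = τ then 1 else 0)) ∧
    ((Matrix.of fun q r : Fin 4 × Fin 4 => Rmat ℓ p q.1 q.2 r.1 r.2) *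
      (Matrix.of fun q r : Fin 4 × Fin 4 => Rmat ℓ p q.1 q.2 r.1 r.2) = 1) ∧
    IsUnit (Matrix.of fun q r : Fin 4 × Fin 4 => Rmat ℓ p q.1 q.2 r.1 r.2) :=
  stmt1_general ℓ p hlp
end

section
/- Let A be a unital associative k-algebra and suppose x : {0,1,2,3} → A satisfies the A_{ℓ,p}-relations. Then for all μ,ν ∈ {0,1,2,3}: x_μ x_{μ'} x_{ν'} + x_{ν'} x_{μ'} x_μ = ℓ_{μν} ( x_μ x_{ν'} x_{μ'} + x_{μ'} x_{ν'} x_μ ). -/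
lemma key_aux {k A : Type*} [Field k] [Ring A] [Algebra k A] (L Q : k) (a b c d : A)
    (hbc : b * c = L • (c * b) + Q • (d * a))
    (hcb : c * b = L • (b * c) + (-Q) • (a * d)) :
    a * b * c + c * b * a = L • (a * c * b + b * c * a) := by
  have h : a * b * c + c * b * a = a * (b * c) + (c * b) * a := by
    rw [mul_assoc]
  have e1 : a * (b * c) = L • (a * (c * b)) + Q • (a * (d * a)) := by
    rw [hbc]; simp [mul_add, mul_smul_comm]
  have e2 : (c * b) * a = L • (b * (c * a)) + (-Q) • (a * (d * a)) := by
    rw [hcb]; simp [add_mul, smul_mul_assoc, mul_assoc]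
  rw [h, e1, e2]
  simp only [smul_add, neg_smul, mul_assoc]
  abel

/-- Lemma 4.1: for all `μ,ν`:
`x_μ x_{μ'} x_{ν'} + x_{ν'} x_{μ'} x_μ = ℓ_{μν} (x_μ x_{ν'} x_{μ'} + x_{μ'} x_{ν'} x_μ)`. -/
theorem stmt2 {k A : Type*} [Field k] [CharZero k] [Ring A] [Algebra k A]
    (ℓ p : Fin 4 → Fin 4 → k) (hlp : GoodParams ℓ p)
    (x : Fin 4 → A) (hx : AlpRel ℓ p x) :
    ∀ μ ν : Fin 4,
      x μ * x (pr μ ν).1 * x (pr μ ν).2 + x (pr μ ν).2 * x (pr μ ν).1 * x μ =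
        ℓ μ ν • (x μ * x (pr μ ν).2 * x (pr μ ν).1 +
          x (pr μ ν).1 * x (pr μ ν).2 * x μ) := by
  obtain ⟨h1, h2, h3, h4, h5⟩ := hlp
  intro μ ν
  have hpr1 : pr (pr μ ν).1 (pr μ ν).2 = (μ, ν) := by revert μ ν; decide
  have hpr2 : pr (pr μ ν).2 (pr μ ν).1 = (ν, μ) := by revert μ ν; decide
  have hbc := hx (pr μ ν).1 (pr μ ν).2
  have hcb := hx (pr μ ν).2 (pr μ ν).1
  rw [hpr1] at hbc
  rw [hpr2] at hcb
  have hL : ℓ (pr μ ν).1 (pr μ ν).2 = ℓ μ ν := by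
    have := h3 (pr μ ν).1 (pr μ ν).2
    rw [hpr1] at this
    exact this.symm
  have hL2 : ℓ (pr μ ν).2 (pr μ ν).1 = ℓ μ ν := by
    rw [← h2]; exact hL
  have hQ : p (pr μ ν).2 (pr μ ν).1 = - p (pr μ ν).1 (pr μ ν).2 := by
    rw [h4]
  rw [hL] at hbc
  rw [hL2, hQ] at hcb
  exact key_aux (ℓ μ ν) (p (pr μ ν).1 (pr μ ν).2) (x μ) (x (pr μ ν).1)
    (x (pr μ ν).2) (x ν) hbc hcb
end

section
/- Suppose c : {0,1,2,3} → k satisfies, for each ν ∈ {0,1,2,3}, the relation c_{μ_ν} p_{μ_ν ν} + c_{μ̃_ν} p_{μ̃_ν ν} + c_{ν̃} ℓ_{μ̃_ν ν} p_{ν̃ ν} = 0. Then for every unital associative k-algebra A and every x : {0,1,2,3} → A satisfying the A_{ℓ,p}-relations, the element R_c := Σ_{μ=0}^{3} c_μ x_μ² commutes with x_ν for every ν ∈ {0,1,2,3}. -/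
section Aux

variable {k A : Type*} [Field k] [Ring A] [Algebra k A]

lemma aux1 {l q : k} {y w u v : A}
    (h1 : y * w = l • (w * y) + q • (u * v))
    (h2 : w * y = l • (y * w) - q • (v * u)) :
    y * y * w - w * (y * y) = q • (y * (u * v) + v * (u * y)) := by
  have ha : y * y * w = l • (y * (w * y)) + q • (y * (u * v)) := by
    rw [mul_assoc, h1]; simp only [mul_add, mul_smul_comm]
  have hb : w * (y * y) = l • ((y * w) * y) - q • ((v * u) * y) := by
    rw [← mul_assoc, h2]; simp only [sub_mul, smul_mul_assoc]
  rw [ha, hb]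
  simp only [mul_assoc]
  module

lemma aux2 {l q : k} {y z u v : A}
    (h1 : y * z = l • (z * y) + q • (u * v))
    (h2 : z * y = l • (y * z) - q • (v * u)) :
    y * (z * u) + u * (z * y) = l • (z * (y * u) + u * (y * z)) := by
  have ha : y * (z * u) = l • ((z * y) * u) + q • ((u * v) * u) := by
    rw [← mul_assoc, h1]; simp only [add_mul, smul_mul_assoc]
  have hb : u * (z * y) = l • (u * (y * z)) - q • (u * (v * u)) := by
    rw [h2]; simp only [mul_sub, mul_smul_comm]
  rw [ha, hb]
  simp only [mul_assoc]
  module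

end Aux

/-- Proposition 4.2: if `c_{μ_ν} p_{μ_ν ν} + c_{μ̃_ν} p_{μ̃_ν ν}
+ c_{ν̃} ℓ_{μ̃_ν ν} p_{ν̃ ν} = 0` for each `ν`, then `R_c := Σ_μ c_μ x_μ²`
commutes with every `x_ν`. -/
theorem stmt3 {k : Type*} [Field k] [CharZero k]
    (ℓ p : Fin 4 → Fin 4 → k) (hlp : GoodParams ℓ p) (c : Fin 4 → k)
    (hc : ∀ ν : Fin 4,
      c (tnu ν).2.1 * p (tnu ν).2.1 ν + c (tnu ν).2.2 * p (tnu ν).2.2 ν +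
        c (tnu ν).1 * (ℓ (tnu ν).2.2 ν * p (tnu ν).1 ν) = 0) :
    ∀ (A : Type*) [Ring A] [Algebra k A], ∀ x : Fin 4 → A, AlpRel ℓ p x →
      ∀ ν : Fin 4,
        (∑ μ : Fin 4, c μ • (x μ * x μ)) * x ν =
          x ν * ∑ μ : Fin 4, c μ • (x μ * x μ) := by
  intro A _ _ x hx ν
  obtain ⟨hl1, hl2, hl3, hl4, hl5⟩ := hlp
  have rel1 : ∀ a b u v : Fin 4, pr a b = (v, u) →
      x a * x b = ℓ a b • (x b * x a) + p a b • (x u * x v) := by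
    intro a b u v h
    have h' := hx a b
    rw [h] at h'
    simpa using h'
  have rel2 : ∀ a b u v : Fin 4, pr b a = (u, v) →
      x b * x a = ℓ a b • (x a * x b) - p a b • (x v * x u) := by
    intro a b u v h
    have h' := hx b a
    rw [h, hl2 b a, hl4 b a] at h'
    simpa [neg_smul, sub_eq_add_neg] using h'
  have hν : ν = 0 ∨ ν = 1 ∨ ν = 2 ∨ ν = 3 := by
    have : ∀ m : Fin 4, m = 0 ∨ m = 1 ∨ m = 2 ∨ m = 3 := by decide
    exact this ν
  rw [← sub_eq_zero]
  simp only [Fin.sum_univ_four]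
  rcases hν with h | h | h | h <;> subst h
  · -- ν = 0
    have E1 : x 1 * x 1 * x 0 - x 0 * (x 1 * x 1)
        = p 1 0 • (x 1 * (x 2 * x 3) + x 3 * (x 2 * x 1)) :=
      aux1 (rel1 1 0 2 3 (by decide)) (rel2 1 0 2 3 (by decide))
    have E2 : x 2 * x 2 * x 0 - x 0 * (x 2 * x 2)
        = p 2 0 • (x 2 * (x 1 * x 3) + x 3 * (x 1 * x 2)) :=
      aux1 (rel1 2 0 1 3 (by decide)) (rel2 2 0 1 3 (by decide))
    have E3 : x 3 * x 3 * x 0 - x 0 * (x 3 * x 3)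
        = p 3 0 • (x 3 * (x 1 * x 2) + x 2 * (x 1 * x 3)) :=
      aux1 (rel1 3 0 1 2 (by decide)) (rel2 3 0 1 2 (by decide))
    have E4 : x 1 * (x 2 * x 3) + x 3 * (x 2 * x 1)
        = ℓ 1 2 • (x 2 * (x 1 * x 3) + x 3 * (x 1 * x 2)) :=
      aux2 (rel1 1 2 3 0 (by decide)) (rel2 1 2 3 0 (by decide))
    have hs : c 1 * p 1 0 * ℓ 1 2 + c 2 * p 2 0 + c 3 * p 3 0 = 0 := by
      have h0 : c 2 * p 2 0 + c 3 * p 3 0 + c 1 * (ℓ 3 0 * p 1 0) = 0 := hc 0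
      have e1 : ℓ 2 1 = ℓ 3 0 := hl3 3 0
      have e2 : ℓ 1 2 = ℓ 2 1 := hl2 1 2
      linear_combination h0 + c 1 * p 1 0 * e2 + c 1 * p 1 0 * e1
    calc (c 0 • (x 0 * x 0) + c 1 • (x 1 * x 1) + c 2 • (x 2 * x 2) + c 3 • (x 3 * x 3)) * x 0
          - x 0 * (c 0 • (x 0 * x 0) + c 1 • (x 1 * x 1) + c 2 • (x 2 * x 2) + c 3 • (x 3 * x 3))
        = c 1 • (x 1 * x 1 * x 0 - x 0 * (x 1 * x 1))
          + c 2 • (x 2 * x 2 * x 0 - x 0 * (x 2 * x 2))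
          + c 3 • (x 3 * x 3 * x 0 - x 0 * (x 3 * x 3)) := by
          simp only [add_mul, mul_add, smul_mul_assoc, mul_smul_comm, smul_sub, mul_assoc]
          module
      _ = c 1 • (p 1 0 • (x 1 * (x 2 * x 3) + x 3 * (x 2 * x 1)))
          + c 2 • (p 2 0 • (x 2 * (x 1 * x 3) + x 3 * (x 1 * x 2)))
          + c 3 • (p 3 0 • (x 3 * (x 1 * x 2) + x 2 * (x 1 * x 3))) := by rw [E1, E2, E3]
      _ = (c 1 * p 1 0 * ℓ 1 2 + c 2 * p 2 0 + c 3 * p 3 0)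
            • (x 2 * (x 1 * x 3) + x 3 * (x 1 * x 2)) := by rw [E4]; module
      _ = 0 := by rw [hs, zero_smul]
  · -- ν = 1
    have E1 : x 0 * x 0 * x 1 - x 1 * (x 0 * x 0)
        = p 0 1 • (x 0 * (x 3 * x 2) + x 2 * (x 3 * x 0)) :=
      aux1 (rel1 0 1 3 2 (by decide)) (rel2 0 1 3 2 (by decide))
    have E2 : x 2 * x 2 * x 1 - x 1 * (x 2 * x 2)
        = p 2 1 • (x 2 * (x 0 * x 3) + x 3 * (x 0 * x 2)) :=
      aux1 (rel1 2 1 0 3 (by decide)) (rel2 2 1 0 3 (by decide))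
    have E3 : x 3 * x 3 * x 1 - x 1 * (x 3 * x 3)
        = p 3 1 • (x 3 * (x 0 * x 2) + x 2 * (x 0 * x 3)) :=
      aux1 (rel1 3 1 0 2 (by decide)) (rel2 3 1 0 2 (by decide))
    have E4 : x 0 * (x 3 * x 2) + x 2 * (x 3 * x 0)
        = ℓ 0 3 • (x 3 * (x 0 * x 2) + x 2 * (x 0 * x 3)) :=
      aux2 (rel1 0 3 2 1 (by decide)) (rel2 0 3 2 1 (by decide))
    have hs : c 0 * p 0 1 * ℓ 0 3 + c 2 * p 2 1 + c 3 * p 3 1 = 0 := by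
      have h0 : c 3 * p 3 1 + c 2 * p 2 1 + c 0 * (ℓ 2 1 * p 0 1) = 0 := hc 1
      have e1 : ℓ 3 0 = ℓ 2 1 := hl3 2 1
      have e2 : ℓ 0 3 = ℓ 3 0 := hl2 0 3
      linear_combination h0 + c 0 * p 0 1 * e2 + c 0 * p 0 1 * e1
    calc (c 0 • (x 0 * x 0) + c 1 • (x 1 * x 1) + c 2 • (x 2 * x 2) + c 3 • (x 3 * x 3)) * x 1
          - x 1 * (c 0 • (x 0 * x 0) + c 1 • (x 1 * x 1) + c 2 • (x 2 * x 2) + c 3 • (x 3 * x 3))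
        = c 0 • (x 0 * x 0 * x 1 - x 1 * (x 0 * x 0))
          + c 2 • (x 2 * x 2 * x 1 - x 1 * (x 2 * x 2))
          + c 3 • (x 3 * x 3 * x 1 - x 1 * (x 3 * x 3)) := by
          simp only [add_mul, mul_add, smul_mul_assoc, mul_smul_comm, smul_sub, mul_assoc]
          module
      _ = c 0 • (p 0 1 • (x 0 * (x 3 * x 2) + x 2 * (x 3 * x 0)))
          + c 2 • (p 2 1 • (x 2 * (x 0 * x 3) + x 3 * (x 0 * x 2)))
          + c 3 • (p 3 1 • (x 3 * (x 0 * x 2) + x 2 * (x 0 * x 3))) := by rw [E1, E2, E3]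
      _ = (c 0 * p 0 1 * ℓ 0 3 + c 2 * p 2 1 + c 3 * p 3 1)
            • (x 3 * (x 0 * x 2) + x 2 * (x 0 * x 3)) := by rw [E4]; module
      _ = 0 := by rw [hs, zero_smul]
  · -- ν = 2
    have E1 : x 0 * x 0 * x 2 - x 2 * (x 0 * x 0)
        = p 0 2 • (x 0 * (x 3 * x 1) + x 1 * (x 3 * x 0)) :=
      aux1 (rel1 0 2 3 1 (by decide)) (rel2 0 2 3 1 (by decide))
    have E2 : x 1 * x 1 * x 2 - x 2 * (x 1 * x 1)
        = p 1 2 • (x 1 * (x 3 * x 0) + x 0 * (x 3 * x 1)) :=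
      aux1 (rel1 1 2 3 0 (by decide)) (rel2 1 2 3 0 (by decide))
    have E3 : x 3 * x 3 * x 2 - x 2 * (x 3 * x 3)
        = p 3 2 • (x 3 * (x 0 * x 1) + x 1 * (x 0 * x 3)) :=
      aux1 (rel1 3 2 0 1 (by decide)) (rel2 3 2 0 1 (by decide))
    have E4 : x 3 * (x 0 * x 1) + x 1 * (x 0 * x 3)
        = ℓ 3 0 • (x 0 * (x 3 * x 1) + x 1 * (x 3 * x 0)) :=
      aux2 (rel1 3 0 1 2 (by decide)) (rel2 3 0 1 2 (by decide))
    have hs : c 0 * p 0 2 + c 1 * p 1 2 + c 3 * p 3 2 * ℓ 3 0 = 0 := by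
      have h0 : c 0 * p 0 2 + c 1 * p 1 2 + c 3 * (ℓ 1 2 * p 3 2) = 0 := hc 2
      have e1 : ℓ 0 3 = ℓ 1 2 := hl3 1 2
      have e2 : ℓ 3 0 = ℓ 0 3 := hl2 3 0
      linear_combination h0 + c 3 * p 3 2 * e2 + c 3 * p 3 2 * e1
    calc (c 0 • (x 0 * x 0) + c 1 • (x 1 * x 1) + c 2 • (x 2 * x 2) + c 3 • (x 3 * x 3)) * x 2
          - x 2 * (c 0 • (x 0 * x 0) + c 1 • (x 1 * x 1) + c 2 • (x 2 * x 2) + c 3 • (x 3 * x 3))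
        = c 0 • (x 0 * x 0 * x 2 - x 2 * (x 0 * x 0))
          + c 1 • (x 1 * x 1 * x 2 - x 2 * (x 1 * x 1))
          + c 3 • (x 3 * x 3 * x 2 - x 2 * (x 3 * x 3)) := by
          simp only [add_mul, mul_add, smul_mul_assoc, mul_smul_comm, smul_sub, mul_assoc]
          module
      _ = c 0 • (p 0 2 • (x 0 * (x 3 * x 1) + x 1 * (x 3 * x 0)))
          + c 1 • (p 1 2 • (x 1 * (x 3 * x 0) + x 0 * (x 3 * x 1)))
          + c 3 • (p 3 2 • (x 3 * (x 0 * x 1) + x 1 * (x 0 * x 3))) := by rw [E1, E2, E3]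
      _ = (c 0 * p 0 2 + c 1 * p 1 2 + c 3 * p 3 2 * ℓ 3 0)
            • (x 0 * (x 3 * x 1) + x 1 * (x 3 * x 0)) := by rw [E4]; module
      _ = 0 := by rw [hs, zero_smul]
  · -- ν = 3
    have E1 : x 0 * x 0 * x 3 - x 3 * (x 0 * x 0)
        = p 0 3 • (x 0 * (x 2 * x 1) + x 1 * (x 2 * x 0)) :=
      aux1 (rel1 0 3 2 1 (by decide)) (rel2 0 3 2 1 (by decide))
    have E2 : x 1 * x 1 * x 3 - x 3 * (x 1 * x 1)
        = p 1 3 • (x 1 * (x 2 * x 0) + x 0 * (x 2 * x 1)) :=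
      aux1 (rel1 1 3 2 0 (by decide)) (rel2 1 3 2 0 (by decide))
    have E3 : x 2 * x 2 * x 3 - x 3 * (x 2 * x 2)
        = p 2 3 • (x 2 * (x 1 * x 0) + x 0 * (x 1 * x 2)) :=
      aux1 (rel1 2 3 1 0 (by decide)) (rel2 2 3 1 0 (by decide))
    have E4 : x 2 * (x 1 * x 0) + x 0 * (x 1 * x 2)
        = ℓ 2 1 • (x 1 * (x 2 * x 0) + x 0 * (x 2 * x 1)) :=
      aux2 (rel1 2 1 0 3 (by decide)) (rel2 2 1 0 3 (by decide))
    have hs : c 0 * p 0 3 + c 1 * p 1 3 + c 2 * p 2 3 * ℓ 2 1 = 0 := by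
      have h0 : c 1 * p 1 3 + c 0 * p 0 3 + c 2 * (ℓ 0 3 * p 2 3) = 0 := hc 3
      have e1 : ℓ 1 2 = ℓ 0 3 := hl3 0 3
      have e2 : ℓ 2 1 = ℓ 1 2 := hl2 2 1
      linear_combination h0 + c 2 * p 2 3 * e2 + c 2 * p 2 3 * e1
    calc (c 0 • (x 0 * x 0) + c 1 • (x 1 * x 1) + c 2 • (x 2 * x 2) + c 3 • (x 3 * x 3)) * x 3
          - x 3 * (c 0 • (x 0 * x 0) + c 1 • (x 1 * x 1) + c 2 • (x 2 * x 2) + c 3 • (x 3 * x 3))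
        = c 0 • (x 0 * x 0 * x 3 - x 3 * (x 0 * x 0))
          + c 1 • (x 1 * x 1 * x 3 - x 3 * (x 1 * x 1))
          + c 2 • (x 2 * x 2 * x 3 - x 3 * (x 2 * x 2)) := by
          simp only [add_mul, mul_add, smul_mul_assoc, mul_smul_comm, smul_sub, mul_assoc]
          module
      _ = c 0 • (p 0 3 • (x 0 * (x 2 * x 1) + x 1 * (x 2 * x 0)))
          + c 1 • (p 1 3 • (x 1 * (x 2 * x 0) + x 0 * (x 2 * x 1)))
          + c 2 • (p 2 3 • (x 2 * (x 1 * x 0) + x 0 * (x 1 * x 2))) := by rw [E1, E2, E3]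
      _ = (c 0 * p 0 3 + c 1 * p 1 3 + c 2 * p 2 3 * ℓ 2 1)
            • (x 1 * (x 2 * x 0) + x 0 * (x 2 * x 1)) := by rw [E4]; module
      _ = 0 := by rw [hs, zero_smul]
end

section
/- Suppose that for each ν ∈ {0,1,2,3} the parameters satisfy p_{μ_ν ν} + p_{μ̃_ν ν} + ℓ_{μ̃_ν ν} p_{ν̃ ν} = 0. Then for every unital associative k-algebra A and every x : {0,1,2,3} → A satisfying the A_{ℓ,p}-relations, the element R := x₀² + x₁² + x₂² + x₃² commutes with x_ν for every ν ∈ {0,1,2,3}. -/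
lemma pr_swap_s4 : ∀ a b : Fin 4, pr b a = ((pr a b).2, (pr a b).1) := by decide

/-- The commutator of `x_μ²` with `x_ν`. -/
lemma comm_sq {k A : Type*} [Field k] [Ring A] [Algebra k A]
    (ℓ p : Fin 4 → Fin 4 → k)
    (hsym : ∀ μ ν : Fin 4, ℓ μ ν = ℓ ν μ)
    (hanti : ∀ μ ν : Fin 4, p μ ν = - p ν μ)
    (x : Fin 4 → A) (hx : AlpRel ℓ p x) (μ ν : Fin 4) :
    x μ * x μ * x ν - x ν * (x μ * x μ)
      = p μ ν • (x μ * (x (pr μ ν).2 * x (pr μ ν).1)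
          + x (pr ν μ).2 * (x (pr ν μ).1 * x μ)) := by
  have A1 := hx μ ν
  have A2 := hx ν μ
  have e1 : x μ * (x μ * x ν)
      = ℓ μ ν • (x μ * (x ν * x μ))
        + p μ ν • (x μ * (x (pr μ ν).2 * x (pr μ ν).1)) := by
    conv_lhs => rw [A1]
    simp only [mul_add, mul_smul_comm]
  have e2 : x ν * (x μ * x μ)
      = ℓ ν μ • (x μ * (x ν * x μ))
        + p ν μ • (x (pr ν μ).2 * (x (pr ν μ).1 * x μ)) := by
    conv_lhs => rw [← mul_assoc, A2]
    simp only [add_mul, smul_mul_assoc, mul_assoc]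
  rw [mul_assoc, e1, e2, hsym ν μ, hanti ν μ]
  module

/-- The key merging identity. Here write `c := (pr a b).2`. -/
lemma key_lem {k A : Type*} [Field k] [Ring A] [Algebra k A]
    (ℓ p : Fin 4 → Fin 4 → k)
    (hsym : ∀ μ ν : Fin 4, ℓ μ ν = ℓ ν μ)
    (hanti : ∀ μ ν : Fin 4, p μ ν = - p ν μ)
    (x : Fin 4 → A) (hx : AlpRel ℓ p x) (a b : Fin 4) :
    x a * (x b * x (pr a b).2) + x (pr a b).2 * (x b * x a)
      = ℓ a b • (x b * (x a * x (pr a b).2) + x (pr a b).2 * (x a * x b)) := by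
  have A1 := hx a b
  have A2 := hx b a
  rw [pr_swap_s4 a b] at A2
  have e1 : x a * (x b * x (pr a b).2)
      = ℓ a b • (x b * (x a * x (pr a b).2))
        + p a b • (x (pr a b).2 * (x (pr a b).1 * x (pr a b).2)) := by
    conv_lhs => rw [← mul_assoc, A1]
    simp only [add_mul, smul_mul_assoc, mul_assoc]
  have e2 : x (pr a b).2 * (x b * x a)
      = ℓ b a • (x (pr a b).2 * (x a * x b))
        + p b a • (x (pr a b).2 * (x (pr a b).1 * x (pr a b).2)) := by
    conv_lhs => rw [A2]
    simp only [mul_add, mul_smul_comm]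
  rw [e1, e2, hsym b a, hanti b a]
  module

/-- Corollary 4.3, first part: if
`p_{μ_ν ν} + p_{μ̃_ν ν} + ℓ_{μ̃_ν ν} p_{ν̃ ν} = 0` for each `ν`, then
`R := x₀² + x₁² + x₂² + x₃²` commutes with every `x_ν`. -/
theorem stmt4 {k : Type*} [Field k] [CharZero k]
    (ℓ p : Fin 4 → Fin 4 → k) (hlp : GoodParams ℓ p)
    (hcond : ∀ ν : Fin 4,
      p (tnu ν).2.1 ν + p (tnu ν).2.2 ν + ℓ (tnu ν).2.2 ν * p (tnu ν).1 ν = 0) :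
    ∀ (A : Type*) [Ring A] [Algebra k A], ∀ x : Fin 4 → A, AlpRel ℓ p x →
      ∀ ν : Fin 4,
        (x 0 * x 0 + x 1 * x 1 + x 2 * x 2 + x 3 * x 3) * x ν =
          x ν * (x 0 * x 0 + x 1 * x 1 + x 2 * x 2 + x 3 * x 3) := by
  obtain ⟨h1, h2, h3, h4, h5⟩ := hlp
  intro A _ _ x hxr ν
  fin_cases ν
  · -- ν = 0
    show (x 0 * x 0 + x 1 * x 1 + x 2 * x 2 + x 3 * x 3) * x 0 =
          x 0 * (x 0 * x 0 + x 1 * x 1 + x 2 * x 2 + x 3 * x 3)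
    have hc : p 2 0 + p 3 0 + ℓ 3 0 * p 1 0 = 0 := hcond 0
    have lEq : ℓ 1 2 = ℓ 3 0 := (h2 1 2).trans (h3 3 0)
    have c1 : x 1 * x 1 * x 0 - x 0 * (x 1 * x 1)
        = p 1 0 • (x 1 * (x 2 * x 3) + x 3 * (x 2 * x 1)) :=
      comm_sq ℓ p h2 h4 x hxr 1 0
    have c2 : x 2 * x 2 * x 0 - x 0 * (x 2 * x 2)
        = p 2 0 • (x 2 * (x 1 * x 3) + x 3 * (x 1 * x 2)) :=
      comm_sq ℓ p h2 h4 x hxr 2 0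
    have c3 : x 3 * x 3 * x 0 - x 0 * (x 3 * x 3)
        = p 3 0 • (x 3 * (x 1 * x 2) + x 2 * (x 1 * x 3)) :=
      comm_sq ℓ p h2 h4 x hxr 3 0
    have key : x 1 * (x 2 * x 3) + x 3 * (x 2 * x 1)
        = ℓ 3 0 • (x 2 * (x 1 * x 3) + x 3 * (x 1 * x 2)) := by
      rw [← lEq]; exact key_lem ℓ p h2 h4 x hxr 1 2
    rw [← sub_eq_zero]
    have expand : (x 0 * x 0 + x 1 * x 1 + x 2 * x 2 + x 3 * x 3) * x 0 -
          x 0 * (x 0 * x 0 + x 1 * x 1 + x 2 * x 2 + x 3 * x 3)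
        = (x 1 * x 1 * x 0 - x 0 * (x 1 * x 1)) + (x 2 * x 2 * x 0 - x 0 * (x 2 * x 2))
          + (x 3 * x 3 * x 0 - x 0 * (x 3 * x 3)) := by noncomm_ring
    rw [expand, c1, c2, c3, key, smul_smul]
    match_scalars <;> linear_combination hc
  · -- ν = 1
    show (x 0 * x 0 + x 1 * x 1 + x 2 * x 2 + x 3 * x 3) * x 1 =
          x 1 * (x 0 * x 0 + x 1 * x 1 + x 2 * x 2 + x 3 * x 3)
    have hc : p 3 1 + p 2 1 + ℓ 2 1 * p 0 1 = 0 := hcond 1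
    have lEq : ℓ 0 3 = ℓ 2 1 := (h2 0 3).trans (h3 2 1)
    have c1 : x 0 * x 0 * x 1 - x 1 * (x 0 * x 0)
        = p 0 1 • (x 0 * (x 3 * x 2) + x 2 * (x 3 * x 0)) :=
      comm_sq ℓ p h2 h4 x hxr 0 1
    have c2 : x 2 * x 2 * x 1 - x 1 * (x 2 * x 2)
        = p 2 1 • (x 2 * (x 0 * x 3) + x 3 * (x 0 * x 2)) :=
      comm_sq ℓ p h2 h4 x hxr 2 1
    have c3 : x 3 * x 3 * x 1 - x 1 * (x 3 * x 3)
        = p 3 1 • (x 3 * (x 0 * x 2) + x 2 * (x 0 * x 3)) :=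
      comm_sq ℓ p h2 h4 x hxr 3 1
    have key : x 0 * (x 3 * x 2) + x 2 * (x 3 * x 0)
        = ℓ 2 1 • (x 3 * (x 0 * x 2) + x 2 * (x 0 * x 3)) := by
      rw [← lEq]; exact key_lem ℓ p h2 h4 x hxr 0 3
    rw [← sub_eq_zero]
    have expand : (x 0 * x 0 + x 1 * x 1 + x 2 * x 2 + x 3 * x 3) * x 1 -
          x 1 * (x 0 * x 0 + x 1 * x 1 + x 2 * x 2 + x 3 * x 3)
        = (x 0 * x 0 * x 1 - x 1 * (x 0 * x 0)) + (x 2 * x 2 * x 1 - x 1 * (x 2 * x 2))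
          + (x 3 * x 3 * x 1 - x 1 * (x 3 * x 3)) := by noncomm_ring
    rw [expand, c1, c2, c3, key, smul_smul]
    match_scalars <;> linear_combination hc
  · -- ν = 2
    show (x 0 * x 0 + x 1 * x 1 + x 2 * x 2 + x 3 * x 3) * x 2 =
          x 2 * (x 0 * x 0 + x 1 * x 1 + x 2 * x 2 + x 3 * x 3)
    have hc : p 0 2 + p 1 2 + ℓ 1 2 * p 3 2 = 0 := hcond 2
    have lEq : ℓ 3 0 = ℓ 1 2 := (h2 3 0).trans (h3 1 2)
    have c1 : x 3 * x 3 * x 2 - x 2 * (x 3 * x 3)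
        = p 3 2 • (x 3 * (x 0 * x 1) + x 1 * (x 0 * x 3)) :=
      comm_sq ℓ p h2 h4 x hxr 3 2
    have c2 : x 0 * x 0 * x 2 - x 2 * (x 0 * x 0)
        = p 0 2 • (x 0 * (x 3 * x 1) + x 1 * (x 3 * x 0)) :=
      comm_sq ℓ p h2 h4 x hxr 0 2
    have c3 : x 1 * x 1 * x 2 - x 2 * (x 1 * x 1)
        = p 1 2 • (x 1 * (x 3 * x 0) + x 0 * (x 3 * x 1)) :=
      comm_sq ℓ p h2 h4 x hxr 1 2
    have key : x 3 * (x 0 * x 1) + x 1 * (x 0 * x 3)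
        = ℓ 1 2 • (x 0 * (x 3 * x 1) + x 1 * (x 3 * x 0)) := by
      rw [← lEq]; exact key_lem ℓ p h2 h4 x hxr 3 0
    rw [← sub_eq_zero]
    have expand : (x 0 * x 0 + x 1 * x 1 + x 2 * x 2 + x 3 * x 3) * x 2 -
          x 2 * (x 0 * x 0 + x 1 * x 1 + x 2 * x 2 + x 3 * x 3)
        = (x 3 * x 3 * x 2 - x 2 * (x 3 * x 3)) + (x 0 * x 0 * x 2 - x 2 * (x 0 * x 0))
          + (x 1 * x 1 * x 2 - x 2 * (x 1 * x 1)) := by noncomm_ring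
    rw [expand, c1, c2, c3, key, smul_smul]
    match_scalars <;> linear_combination hc
  · -- ν = 3
    show (x 0 * x 0 + x 1 * x 1 + x 2 * x 2 + x 3 * x 3) * x 3 =
          x 3 * (x 0 * x 0 + x 1 * x 1 + x 2 * x 2 + x 3 * x 3)
    have hc : p 1 3 + p 0 3 + ℓ 0 3 * p 2 3 = 0 := hcond 3
    have lEq : ℓ 2 1 = ℓ 0 3 := (h2 2 1).trans (h3 0 3)
    have c1 : x 2 * x 2 * x 3 - x 3 * (x 2 * x 2)
        = p 2 3 • (x 2 * (x 1 * x 0) + x 0 * (x 1 * x 2)) :=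
      comm_sq ℓ p h2 h4 x hxr 2 3
    have c2 : x 1 * x 1 * x 3 - x 3 * (x 1 * x 1)
        = p 1 3 • (x 1 * (x 2 * x 0) + x 0 * (x 2 * x 1)) :=
      comm_sq ℓ p h2 h4 x hxr 1 3
    have c3 : x 0 * x 0 * x 3 - x 3 * (x 0 * x 0)
        = p 0 3 • (x 0 * (x 2 * x 1) + x 1 * (x 2 * x 0)) :=
      comm_sq ℓ p h2 h4 x hxr 0 3
    have key : x 2 * (x 1 * x 0) + x 0 * (x 1 * x 2)
        = ℓ 0 3 • (x 1 * (x 2 * x 0) + x 0 * (x 2 * x 1)) := by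
      rw [← lEq]; exact key_lem ℓ p h2 h4 x hxr 2 1
    rw [← sub_eq_zero]
    have expand : (x 0 * x 0 + x 1 * x 1 + x 2 * x 2 + x 3 * x 3) * x 3 -
          x 3 * (x 0 * x 0 + x 1 * x 1 + x 2 * x 2 + x 3 * x 3)
        = (x 2 * x 2 * x 3 - x 3 * (x 2 * x 2)) + (x 1 * x 1 * x 3 - x 3 * (x 1 * x 1))
          + (x 0 * x 0 * x 3 - x 3 * (x 0 * x 0)) := by noncomm_ring
    rw [expand, c1, c2, c3, key, smul_smul]
    match_scalars <;> linear_combination hc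
end

section
/- Suppose that for each ν ∈ {0,1,2,3} the parameters satisfy p_{μ_ν ν} + p_{μ̃_ν ν} + ℓ_{μ̃_ν ν} p_{ν̃ ν} = 0, and that c : {0,1,2,3} → k satisfies, for each ν, (c_{μ_ν} − c_{ν̃}) p_{μ_ν ν} + (c_{μ̃_ν} − c_{ν̃}) p_{μ̃_ν ν} = 0. Then for every unital associative k-algebra A and every x : {0,1,2,3} → A satisfying the A_{ℓ,p}-relations, the element R_c := Σ_{μ=0}^{3} c_μ x_μ² commutes with x_ν for every ν ∈ {0,1,2,3}. -/
/-- Corollary 4.3, second part: if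
`p_{μ_ν ν} + p_{μ̃_ν ν} + ℓ_{μ̃_ν ν} p_{ν̃ ν} = 0` and
`(c_{μ_ν} − c_{ν̃}) p_{μ_ν ν} + (c_{μ̃_ν} − c_{ν̃}) p_{μ̃_ν ν} = 0` for each `ν`,
then `R_c := Σ_μ c_μ x_μ²` commutes with every `x_ν`. -/
theorem stmt5 {k : Type*} [Field k] [CharZero k]
    (ℓ p : Fin 4 → Fin 4 → k) (hlp : GoodParams ℓ p)
    (hcond : ∀ ν : Fin 4,
      p (tnu ν).2.1 ν + p (tnu ν).2.2 ν + ℓ (tnu ν).2.2 ν * p (tnu ν).1 ν = 0)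
    (c : Fin 4 → k)
    (hc : ∀ ν : Fin 4,
      (c (tnu ν).2.1 - c (tnu ν).1) * p (tnu ν).2.1 ν +
        (c (tnu ν).2.2 - c (tnu ν).1) * p (tnu ν).2.2 ν = 0) :
    ∀ (A : Type*) [Ring A] [Algebra k A], ∀ x : Fin 4 → A, AlpRel ℓ p x →
      ∀ ν : Fin 4,
        (∑ μ : Fin 4, c μ • (x μ * x μ)) * x ν =
          x ν * ∑ μ : Fin 4, c μ • (x μ * x μ) := by
  obtain ⟨hll, hlsym, hlpr, hpa, hlpp⟩ := hlp
  intro A _ _ x hx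
  have sq : ∀ μ ν : Fin 4, x μ * x μ * x ν = x ν * (x μ * x μ) +
      (p μ ν • (x μ * (x (pr μ ν).2 * x (pr μ ν).1)) -
        p ν μ • (x (pr ν μ).2 * x (pr ν μ).1 * x μ)) := by
    intro μ ν
    have h1 := hx μ ν
    have h2 := hx ν μ
    have A1 : x μ * x μ * x ν = ℓ μ ν • (x μ * (x ν * x μ)) +
        p μ ν • (x μ * (x (pr μ ν).2 * x (pr μ ν).1)) := by
      conv_lhs => rw [mul_assoc, h1]
      simp only [mul_add, mul_smul_comm]
    have A2 : x ν * (x μ * x μ) = ℓ ν μ • (x μ * x ν * x μ) +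
        p ν μ • (x (pr ν μ).2 * x (pr ν μ).1 * x μ) := by
      conv_lhs => rw [← mul_assoc, h2]
      simp only [add_mul, smul_mul_assoc]
    rw [A1, A2, hlsym ν μ]
    simp only [mul_assoc]
    module
  intro ν
  have hν : ν = 0 ∨ ν = 1 ∨ ν = 2 ∨ ν = 3 := by omega
  rcases hν with h | h | h | h <;> subst h
  · -- ν = 0
    have e1 : x 1 * x 1 * x 0 = x 0 * (x 1 * x 1) +
        (p 1 0 • (x 1 * (x 2 * x 3)) - p 0 1 • (x 3 * x 2 * x 1)) := sq 1 0
    have e2 : x 2 * x 2 * x 0 = x 0 * (x 2 * x 2) +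
        (p 2 0 • (x 2 * (x 1 * x 3)) - p 0 2 • (x 3 * x 1 * x 2)) := sq 2 0
    have e3 : x 3 * x 3 * x 0 = x 0 * (x 3 * x 3) +
        (p 3 0 • (x 3 * (x 1 * x 2)) - p 0 3 • (x 2 * x 1 * x 3)) := sq 3 0
    have h12 : x 1 * x 2 = ℓ 1 2 • (x 2 * x 1) + p 1 2 • (x 3 * x 0) := hx 1 2
    have h21 : x 2 * x 1 = ℓ 2 1 • (x 1 * x 2) + p 2 1 • (x 0 * x 3) := hx 2 1
    have w1 : x 1 * (x 2 * x 3) = ℓ 1 2 • (x 2 * (x 1 * x 3)) + p 1 2 • (x 3 * (x 0 * x 3)) := by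
      conv_lhs => rw [← mul_assoc, h12]
      simp only [add_mul, smul_mul_assoc, mul_assoc]
    have w2 : x 3 * x 2 * x 1 = ℓ 2 1 • (x 3 * (x 1 * x 2)) + p 2 1 • (x 3 * (x 0 * x 3)) := by
      conv_lhs => rw [mul_assoc, h21]
      simp only [mul_add, mul_smul_comm]
    have hp01 : p 0 1 = -p 1 0 := hpa 0 1
    have hp02 : p 0 2 = -p 2 0 := hpa 0 2
    have hp03 : p 0 3 = -p 3 0 := hpa 0 3
    have hp12 : p 1 2 = -p 2 1 := hpa 1 2
    have hl21 : ℓ 2 1 = ℓ 3 0 := hlpr 3 0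
    have hl12 : ℓ 1 2 = ℓ 3 0 := (hlsym 1 2).trans hl21
    have hcnd : p 2 0 + p 3 0 + ℓ 3 0 * p 1 0 = 0 := hcond 0
    have hcc : (c 2 - c 1) * p 2 0 + (c 3 - c 1) * p 3 0 = 0 := hc 0
    have main0 : c 1 * (p 1 0 * ℓ 3 0) + c 2 * p 2 0 + c 3 * p 3 0 = 0 := by
      linear_combination hcc + c 1 * hcnd
    simp only [Fin.sum_univ_four, add_mul, mul_add, smul_mul_assoc, mul_smul_comm]
    rw [e1, e2, e3, w1, w2]
    simp only [hp01, hp02, hp03, hp12, hl12, hl21, mul_assoc, smul_add, smul_sub,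
      smul_smul, smul_neg, neg_smul]
    match_scalars <;> (first | ring1 | linear_combination main0)
  · -- ν = 1
    have e0 : x 0 * x 0 * x 1 = x 1 * (x 0 * x 0) +
        (p 0 1 • (x 0 * (x 3 * x 2)) - p 1 0 • (x 2 * x 3 * x 0)) := sq 0 1
    have e2 : x 2 * x 2 * x 1 = x 1 * (x 2 * x 2) +
        (p 2 1 • (x 2 * (x 0 * x 3)) - p 1 2 • (x 3 * x 0 * x 2)) := sq 2 1
    have e3 : x 3 * x 3 * x 1 = x 1 * (x 3 * x 3) +
        (p 3 1 • (x 3 * (x 0 * x 2)) - p 1 3 • (x 2 * x 0 * x 3)) := sq 3 1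
    have h03 : x 0 * x 3 = ℓ 0 3 • (x 3 * x 0) + p 0 3 • (x 2 * x 1) := hx 0 3
    have h30 : x 3 * x 0 = ℓ 3 0 • (x 0 * x 3) + p 3 0 • (x 1 * x 2) := hx 3 0
    have w1 : x 0 * (x 3 * x 2) = ℓ 0 3 • (x 3 * (x 0 * x 2)) + p 0 3 • (x 2 * (x 1 * x 2)) := by
      conv_lhs => rw [← mul_assoc, h03]
      simp only [add_mul, smul_mul_assoc, mul_assoc]
    have w2 : x 2 * x 3 * x 0 = ℓ 3 0 • (x 2 * (x 0 * x 3)) + p 3 0 • (x 2 * (x 1 * x 2)) := by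
      conv_lhs => rw [mul_assoc, h30]
      simp only [mul_add, mul_smul_comm]
    have hp10 : p 1 0 = -p 0 1 := hpa 1 0
    have hp12 : p 1 2 = -p 2 1 := hpa 1 2
    have hp13 : p 1 3 = -p 3 1 := hpa 1 3
    have hp30 : p 3 0 = -p 0 3 := hpa 3 0
    have hl30 : ℓ 3 0 = ℓ 2 1 := hlpr 2 1
    have hl03 : ℓ 0 3 = ℓ 2 1 := (hlsym 0 3).trans hl30
    have hcnd : p 3 1 + p 2 1 + ℓ 2 1 * p 0 1 = 0 := hcond 1
    have hcc : (c 3 - c 0) * p 3 1 + (c 2 - c 0) * p 2 1 = 0 := hc 1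
    have main1 : c 0 * (p 0 1 * ℓ 2 1) + c 2 * p 2 1 + c 3 * p 3 1 = 0 := by
      linear_combination hcc + c 0 * hcnd
    simp only [Fin.sum_univ_four, add_mul, mul_add, smul_mul_assoc, mul_smul_comm]
    rw [e0, e2, e3, w1, w2]
    simp only [hp10, hp12, hp13, hp30, hl30, hl03, mul_assoc, smul_add, smul_sub,
      smul_smul, smul_neg, neg_smul]
    match_scalars <;> (first | ring1 | linear_combination main1)
  · -- ν = 2
    have e3 : x 3 * x 3 * x 2 = x 2 * (x 3 * x 3) +
        (p 3 2 • (x 3 * (x 0 * x 1)) - p 2 3 • (x 1 * x 0 * x 3)) := sq 3 2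
    have e0 : x 0 * x 0 * x 2 = x 2 * (x 0 * x 0) +
        (p 0 2 • (x 0 * (x 3 * x 1)) - p 2 0 • (x 1 * x 3 * x 0)) := sq 0 2
    have e1 : x 1 * x 1 * x 2 = x 2 * (x 1 * x 1) +
        (p 1 2 • (x 1 * (x 3 * x 0)) - p 2 1 • (x 0 * x 3 * x 1)) := sq 1 2
    have h30 : x 3 * x 0 = ℓ 3 0 • (x 0 * x 3) + p 3 0 • (x 1 * x 2) := hx 3 0
    have h03 : x 0 * x 3 = ℓ 0 3 • (x 3 * x 0) + p 0 3 • (x 2 * x 1) := hx 0 3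
    have w1 : x 3 * (x 0 * x 1) = ℓ 3 0 • (x 0 * (x 3 * x 1)) + p 3 0 • (x 1 * (x 2 * x 1)) := by
      conv_lhs => rw [← mul_assoc, h30]
      simp only [add_mul, smul_mul_assoc, mul_assoc]
    have w2 : x 1 * x 0 * x 3 = ℓ 0 3 • (x 1 * (x 3 * x 0)) + p 0 3 • (x 1 * (x 2 * x 1)) := by
      conv_lhs => rw [mul_assoc, h03]
      simp only [mul_add, mul_smul_comm]
    have hp20 : p 2 0 = -p 0 2 := hpa 2 0
    have hp21 : p 2 1 = -p 1 2 := hpa 2 1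
    have hp23 : p 2 3 = -p 3 2 := hpa 2 3
    have hp03 : p 0 3 = -p 3 0 := hpa 0 3
    have hl03 : ℓ 0 3 = ℓ 1 2 := hlpr 1 2
    have hl30 : ℓ 3 0 = ℓ 1 2 := (hlsym 3 0).trans hl03
    have hcnd : p 0 2 + p 1 2 + ℓ 1 2 * p 3 2 = 0 := hcond 2
    have hcc : (c 0 - c 3) * p 0 2 + (c 1 - c 3) * p 1 2 = 0 := hc 2
    have main2 : c 3 * (p 3 2 * ℓ 1 2) + c 0 * p 0 2 + c 1 * p 1 2 = 0 := by
      linear_combination hcc + c 3 * hcnd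
    simp only [Fin.sum_univ_four, add_mul, mul_add, smul_mul_assoc, mul_smul_comm]
    rw [e0, e1, e3, w1, w2]
    simp only [hp20, hp21, hp23, hp03, hl03, hl30, mul_assoc, smul_add, smul_sub,
      smul_smul, smul_neg, neg_smul]
    match_scalars <;> (first | ring1 | linear_combination main2)
  · -- ν = 3
    have e2 : x 2 * x 2 * x 3 = x 3 * (x 2 * x 2) +
        (p 2 3 • (x 2 * (x 1 * x 0)) - p 3 2 • (x 0 * x 1 * x 2)) := sq 2 3
    have e0 : x 0 * x 0 * x 3 = x 3 * (x 0 * x 0) +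
        (p 0 3 • (x 0 * (x 2 * x 1)) - p 3 0 • (x 1 * x 2 * x 0)) := sq 0 3
    have e1 : x 1 * x 1 * x 3 = x 3 * (x 1 * x 1) +
        (p 1 3 • (x 1 * (x 2 * x 0)) - p 3 1 • (x 0 * x 2 * x 1)) := sq 1 3
    have h21 : x 2 * x 1 = ℓ 2 1 • (x 1 * x 2) + p 2 1 • (x 0 * x 3) := hx 2 1
    have h12 : x 1 * x 2 = ℓ 1 2 • (x 2 * x 1) + p 1 2 • (x 3 * x 0) := hx 1 2
    have w1 : x 2 * (x 1 * x 0) = ℓ 2 1 • (x 1 * (x 2 * x 0)) + p 2 1 • (x 0 * (x 3 * x 0)) := by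
      conv_lhs => rw [← mul_assoc, h21]
      simp only [add_mul, smul_mul_assoc, mul_assoc]
    have w2 : x 0 * x 1 * x 2 = ℓ 1 2 • (x 0 * (x 2 * x 1)) + p 1 2 • (x 0 * (x 3 * x 0)) := by
      conv_lhs => rw [mul_assoc, h12]
      simp only [mul_add, mul_smul_comm]
    have hp30 : p 3 0 = -p 0 3 := hpa 3 0
    have hp31 : p 3 1 = -p 1 3 := hpa 3 1
    have hp32 : p 3 2 = -p 2 3 := hpa 3 2
    have hp21 : p 2 1 = -p 1 2 := hpa 2 1
    have hl12 : ℓ 1 2 = ℓ 0 3 := hlpr 0 3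
    have hl21 : ℓ 2 1 = ℓ 0 3 := (hlsym 2 1).trans hl12
    have hcnd : p 1 3 + p 0 3 + ℓ 0 3 * p 2 3 = 0 := hcond 3
    have hcc : (c 1 - c 2) * p 1 3 + (c 0 - c 2) * p 0 3 = 0 := hc 3
    have main3 : c 2 * (p 2 3 * ℓ 0 3) + c 1 * p 1 3 + c 0 * p 0 3 = 0 := by
      linear_combination hcc + c 2 * hcnd
    simp only [Fin.sum_univ_four, add_mul, mul_add, smul_mul_assoc, mul_smul_comm]
    rw [e0, e1, e2, w1, w2]
    simp only [hp30, hp31, hp32, hp21, hl12, hl21, mul_assoc, smul_add, smul_sub,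
      smul_smul, smul_neg, neg_smul]
    match_scalars <;> (first | ring1 | linear_combination main3)
end

section
/- Assume a_{μν} ≠ 0 for all distinct μ,ν ∈ {0,1,2,3}, and define ℓ_{μν} := b_{μν} / a_{μν} and q_{μν} := c_{μν} / a_{μν} for distinct μ,ν. Then for each ν ∈ {0,1,2,3}: λ_{μ_ν} q_{μ_ν ν} + λ_{μ̃_ν} q_{μ̃_ν ν} + λ_{ν̃} ℓ_{μ̃_ν ν} q_{ν̃ ν} = 0. -/
/-- `a_{μν} := λ_μ λ_{ν'} + λ_ν λ_{μ'}`. -/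
def aC (lam : Fin 4 → ℂ) (μ ν : Fin 4) : ℂ :=
  lam μ * lam (pr μ ν).2 + lam ν * lam (pr μ ν).1

/-- `b_{μν} := λ_μ λ_{μ'} + λ_ν λ_{ν'}`. -/
def bC (lam : Fin 4 → ℂ) (μ ν : Fin 4) : ℂ :=
  lam μ * lam (pr μ ν).1 + lam ν * lam (pr μ ν).2

/-- `c_{μν} := (−1)^{μ+ν} (λ_{μ'}² − λ_{ν'}²)`. -/
def cC (lam : Fin 4 → ℂ) (μ ν : Fin 4) : ℂ :=
  (-1 : ℂ) ^ (μ.val + ν.val) * (lam (pr μ ν).1 ^ 2 - lam (pr μ ν).2 ^ 2)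

/-! Each of `a_{μν}` and `b_{μν}` is one of the three pairing sums `λ₀λ₁ + λ₂λ₃`, `λ₀λ₂ + λ₁λ₃`,
`λ₀λ₃ + λ₁λ₂`. Relabelling `(w, x, y, z) := (λ_ν, λ_{ν̃}, λ_{μ_ν}, λ_{μ̃_ν})` turns all four
identities into one and the same rational identity, whose only denominators are
`a_{μ_ν ν} = a_{ν̃ ν} = xy + wz` and `a_{μ̃_ν ν} = xz + wy`; clearing them leaves a polynomial
identity. -/

theorem pairing_identity {K : Type*} [Field K] (w x y z : K)
    (hA : x * y + w * z ≠ 0) (hB : x * z + w * y ≠ 0) :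
    y * ((z ^ 2 - x ^ 2) / (x * y + w * z)) + z * (-(y ^ 2 - x ^ 2) / (x * z + w * y)) +
      x * ((y * z + w * x) / (x * z + w * y)) * (-(z ^ 2 - y ^ 2) / (x * y + w * z)) = 0 := by
  -- `field_simp` does not match `hA`, `hB` against its normalised denominators
  generalize hA' : x * y + w * z = A at hA ⊢
  generalize hB' : x * z + w * y = B at hB ⊢
  field_simp
  subst hA' hB'
  ring

section Relabel

variable (lam : Fin 4 → ℂ) (ν : Fin 4)

theorem tnu_mu_ne : (tnu ν).2.1 ≠ ν := by
  fin_cases ν <;> decide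

theorem tnu_muTilde_ne : (tnu ν).2.2 ≠ ν := by
  fin_cases ν <;> decide

theorem aC_mu_nu :
    aC lam (tnu ν).2.1 ν = lam (tnu ν).1 * lam (tnu ν).2.1 + lam ν * lam (tnu ν).2.2 := by
  fin_cases ν <;> simp [aC, tnu, pr] <;> ring

theorem aC_muTilde_nu :
    aC lam (tnu ν).2.2 ν = lam (tnu ν).1 * lam (tnu ν).2.2 + lam ν * lam (tnu ν).2.1 := by
  fin_cases ν <;> simp [aC, tnu, pr] <;> ring

theorem aC_nuTilde_nu :
    aC lam (tnu ν).1 ν = lam (tnu ν).1 * lam (tnu ν).2.1 + lam ν * lam (tnu ν).2.2 := by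
  fin_cases ν <;> simp [aC, tnu, pr]

theorem bC_muTilde_nu :
    bC lam (tnu ν).2.2 ν = lam (tnu ν).2.1 * lam (tnu ν).2.2 + lam ν * lam (tnu ν).1 := by
  fin_cases ν <;> simp [bC, tnu, pr] <;> ring

theorem cC_mu_nu : cC lam (tnu ν).2.1 ν = lam (tnu ν).2.2 ^ 2 - lam (tnu ν).1 ^ 2 := by
  fin_cases ν <;> simp [cC, tnu, pr] <;> ring

theorem cC_muTilde_nu :
    cC lam (tnu ν).2.2 ν = -(lam (tnu ν).2.1 ^ 2 - lam (tnu ν).1 ^ 2) := by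
  fin_cases ν <;> simp [cC, tnu, pr] <;> ring

theorem cC_nuTilde_nu :
    cC lam (tnu ν).1 ν = -(lam (tnu ν).2.2 ^ 2 - lam (tnu ν).2.1 ^ 2) := by
  fin_cases ν <;> simp [cC, tnu, pr] <;> ring

end Relabel

/-- Lemma 4.5: with `ℓ_{μν} := b_{μν}/a_{μν}` and
`q_{μν} := c_{μν}/a_{μν}`, for each `ν`:
`λ_{μ_ν} q_{μ_ν ν} + λ_{μ̃_ν} q_{μ̃_ν ν} + λ_{ν̃} ℓ_{μ̃_ν ν} q_{ν̃ ν} = 0`. -/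
theorem stmt8 (lam : Fin 4 → ℂ)
    (ha : ∀ μ ν : Fin 4, μ ≠ ν → aC lam μ ν ≠ 0) :
    ∀ ν : Fin 4,
      lam (tnu ν).2.1 * (cC lam (tnu ν).2.1 ν / aC lam (tnu ν).2.1 ν) +
        lam (tnu ν).2.2 * (cC lam (tnu ν).2.2 ν / aC lam (tnu ν).2.2 ν) +
        lam (tnu ν).1 * (bC lam (tnu ν).2.2 ν / aC lam (tnu ν).2.2 ν) *
          (cC lam (tnu ν).1 ν / aC lam (tnu ν).1 ν) = 0 := by
  intro ν
  have hA := ha _ ν (tnu_mu_ne ν)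
  have hB := ha _ ν (tnu_muTilde_ne ν)
  rw [aC_mu_nu] at hA
  rw [aC_muTilde_nu] at hB
  rw [aC_mu_nu, aC_muTilde_nu, aC_nuTilde_nu, bC_muTilde_nu, cC_mu_nu, cC_muTilde_nu,
    cC_nuTilde_nu]
  exact pairing_identity _ _ _ _ hA hB
end

section
/- Let A be a unital associative k-algebra and ξ_0, ξ_1, ξ_2, ξ_3 ∈ A. Suppose that for every pair of indices (μ,ν) ∈ {0,1,2,3}² the following four identities hold: (l2) ξ_ν ξ_μ ξ_ν = −p_{μν} ξ_ν ξ_{ν'} ξ_{μ'}; (l4) ξ_{ν'} ξ_μ ξ_ν = −ℓ_{μν} ξ_{ν'} ξ_ν ξ_μ; (r1) ξ_μ ξ_ν ξ_μ = −p_{μν} ξ_{ν'} ξ_{μ'} ξ_μ; (r3) ξ_μ ξ_ν ξ_{μ'} = −ℓ_{μν} ξ_ν ξ_μ ξ_{μ'}. Then for every pair (μ,ν) the following four identities also hold: (l1) 0 = −ℓ_{μν} ξ_μ ξ_ν ξ_μ − p_{μν} ξ_μ ξ_{ν'} ξ_{μ'}; (l3) ξ_{μ'} ξ_μ ξ_ν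 = −ℓ_{μν} ξ_{μ'} ξ_ν ξ_μ − p_{μν} ξ_{μ'} ξ_{ν'} ξ_{μ'}; (r2) 0 = −ℓ_{μν} ξ_ν ξ_μ ξ_ν − p_{μν} ξ_{ν'} ξ_{μ'} ξ_ν; (r4) ξ_μ ξ_ν ξ_{ν'} = −ℓ_{μν} ξ_ν ξ_μ ξ_{ν'} − p_{μν} ξ_{ν'} ξ_{μ'} ξ_{ν'}. -/
/-- Lemma 3.1: identities (l2),(l4),(r1),(r3) on degree-one
elements imply identities (l1),(l3),(r2),(r4). -/
theorem stmt11 {k A : Type*} [Field k] [CharZero k] [Ring A] [Algebra k A]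
    (ℓ p : Fin 4 → Fin 4 → k) (hlp : GoodParams ℓ p) (ξ : Fin 4 → A)
    (hl2 : ∀ μ ν : Fin 4,
      ξ ν * ξ μ * ξ ν = -(p μ ν) • (ξ ν * ξ (pr μ ν).2 * ξ (pr μ ν).1))
    (hl4 : ∀ μ ν : Fin 4,
      ξ (pr μ ν).2 * ξ μ * ξ ν = -(ℓ μ ν) • (ξ (pr μ ν).2 * ξ ν * ξ μ))
    (hr1 : ∀ μ ν : Fin 4,
      ξ μ * ξ ν * ξ μ = -(p μ ν) • (ξ (pr μ ν).2 * ξ (pr μ ν).1 * ξ μ))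
    (hr3 : ∀ μ ν : Fin 4,
      ξ μ * ξ ν * ξ (pr μ ν).1 = -(ℓ μ ν) • (ξ ν * ξ μ * ξ (pr μ ν).1)) :
    ∀ μ ν : Fin 4,
      ((0 : A) = -(ℓ μ ν) • (ξ μ * ξ ν * ξ μ) -
        p μ ν • (ξ μ * ξ (pr μ ν).2 * ξ (pr μ ν).1)) ∧
      (ξ (pr μ ν).1 * ξ μ * ξ ν = -(ℓ μ ν) • (ξ (pr μ ν).1 * ξ ν * ξ μ) -
        p μ ν • (ξ (pr μ ν).1 * ξ (pr μ ν).2 * ξ (pr μ ν).1)) ∧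
      ((0 : A) = -(ℓ μ ν) • (ξ ν * ξ μ * ξ ν) -
        p μ ν • (ξ (pr μ ν).2 * ξ (pr μ ν).1 * ξ ν)) ∧
      (ξ μ * ξ ν * ξ (pr μ ν).2 = -(ℓ μ ν) • (ξ ν * ξ μ * ξ (pr μ ν).2) -
        p μ ν • (ξ (pr μ ν).2 * ξ (pr μ ν).1 * ξ (pr μ ν).2)) := by
  obtain ⟨h1, hsym, hpl, hanti, hcon⟩ := hlp
  have pr_swap : ∀ μ ν : Fin 4, pr ν μ = ((pr μ ν).2, (pr μ ν).1) := by decide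
  have pr_pr : ∀ μ ν : Fin 4, pr (pr μ ν).2 (pr μ ν).1 = (ν, μ) := by decide
  intro μ ν
  have hL : ℓ (pr μ ν).2 (pr μ ν).1 = ℓ μ ν := by
    rw [hsym]; exact hpl μ ν
  refine ⟨?_, ?_, ?_, ?_⟩
  · -- (l1)
    have A : ξ μ * ξ ν * ξ μ =
        -(p ν μ) • (ξ μ * ξ (pr μ ν).1 * ξ (pr μ ν).2) := by
      have h := hl2 ν μ; rwa [pr_swap μ ν] at h
    have B : ξ μ * ξ (pr μ ν).2 * ξ (pr μ ν).1 =
        -(ℓ (pr μ ν).2 (pr μ ν).1) • (ξ μ * ξ (pr μ ν).1 * ξ (pr μ ν).2) := by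
      have h := hl4 (pr μ ν).2 (pr μ ν).1; rwa [pr_pr μ ν] at h
    rw [A, B, hanti ν μ, hL]
    module
  · -- (l3)
    have C : ξ (pr μ ν).1 * ξ (pr μ ν).2 * ξ (pr μ ν).1 =
        -(p (pr μ ν).2 (pr μ ν).1) • (ξ (pr μ ν).1 * ξ μ * ξ ν) := by
      have h := hl2 (pr μ ν).2 (pr μ ν).1; rwa [pr_pr μ ν] at h
    have D : ξ (pr μ ν).1 * ξ ν * ξ μ =
        -(ℓ ν μ) • (ξ (pr μ ν).1 * ξ μ * ξ ν) := by
      have h := hl4 ν μ; rwa [pr_swap μ ν] at h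
    rw [C, D, ← hsym μ ν]
    match_scalars <;> linear_combination (-1 : k) * hcon μ ν
  · -- (r2)
    have E : ξ ν * ξ μ * ξ ν =
        -(p ν μ) • (ξ (pr μ ν).1 * ξ (pr μ ν).2 * ξ ν) := by
      have h := hr1 ν μ; rwa [pr_swap μ ν] at h
    have F : ξ (pr μ ν).2 * ξ (pr μ ν).1 * ξ ν =
        -(ℓ (pr μ ν).2 (pr μ ν).1) • (ξ (pr μ ν).1 * ξ (pr μ ν).2 * ξ ν) := by
      have h := hr3 (pr μ ν).2 (pr μ ν).1; rwa [pr_pr μ ν] at h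
    rw [E, F, hanti ν μ, hL]
    module
  · -- (r4)
    have G : ξ (pr μ ν).2 * ξ (pr μ ν).1 * ξ (pr μ ν).2 =
        -(p (pr μ ν).2 (pr μ ν).1) • (ξ μ * ξ ν * ξ (pr μ ν).2) := by
      have h := hr1 (pr μ ν).2 (pr μ ν).1; rwa [pr_pr μ ν] at h
    have H : ξ ν * ξ μ * ξ (pr μ ν).2 =
        -(ℓ ν μ) • (ξ μ * ξ ν * ξ (pr μ ν).2) := by
      have h := hr3 ν μ; rwa [pr_swap μ ν] at h
    rw [G, H, ← hsym μ ν]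
    match_scalars <;> linear_combination (-1 : k) * hcon μ ν
end

section
/- Assume ℓ₀₁ ≠ 0, ℓ₀₃ ≠ 0 and ℓ₀₂ = ℓ₀₁ ℓ₀₃. Let A be a unital associative k-algebra and suppose ξ : {0,1,2,3} → A satisfies the Ω-relations. Then the four elements ω₀ := ξ₀ ξ₁ ξ₃ ξ₂, ω₁ := ξ₁ ξ₀ ξ₂ ξ₃, ω₂ := ξ₂ ξ₃ ξ₁ ξ₀ and ω₃ := ξ₃ ξ₂ ξ₀ ξ₁ are all equal: ω₀ = ω₁ = ω₂ = ω₃. -/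
/-- `ξ` satisfies the Ω-relations:
`ξ_μ ξ_ν = −ℓ_{μν} ξ_ν ξ_μ − p_{μν} ξ_{ν'} ξ_{μ'}` for all `μ,ν`. -/
def OmRel {k A : Type*} [Field k] [Ring A] [Algebra k A]
    (ℓ p : Fin 4 → Fin 4 → k) (ξ : Fin 4 → A) : Prop :=
  ∀ μ ν : Fin 4,
    ξ μ * ξ ν = -(ℓ μ ν • (ξ ν * ξ μ)) - p μ ν • (ξ (pr μ ν).2 * ξ (pr μ ν).1)

theorem fam {k A : Type*} [Field k] [Ring A] [Algebra k A]
    (ℓ P Q : k) (hℓ : ℓ ≠ 0) (hpq : P * Q = ℓ * ℓ - 1)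
    (u v a b : A)
    (h1 : u = -(ℓ • v) - P • b) (h2 : v = -(ℓ • u) + P • a)
    (h3 : a = -(ℓ • b) - Q • v) (h4 : b = -(ℓ • a) + Q • u)
    (huv : u * v = 0) (hvu : v * u = 0) (hba : b * a = 0) :
    u * b = v * a := by
  have hu2 : u * u = -(P • (u * b)) := by
    nth_rewrite 2 [h1]
    simp only [mul_sub, mul_neg, mul_smul_comm, huv, smul_zero, neg_zero, zero_sub]
  have hau : a * u = -(ℓ • (b * u)) := by
    nth_rewrite 1 [h3]
    simp only [sub_mul, neg_mul, smul_mul_assoc, hvu, smul_zero, neg_zero, sub_zero]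
  have hvb : v * b = -(ℓ • (v * a)) := by
    nth_rewrite 1 [h4]
    simp only [mul_add, mul_neg, mul_smul_comm, hvu, smul_zero, add_zero]
  have hb2 : b * b = Q • (b * u) := by
    nth_rewrite 2 [h4]
    simp only [mul_add, mul_neg, mul_smul_comm, hba, smul_zero, neg_zero, zero_add]
  have hA : u * b = (ℓ * ℓ) • (v * a) - (P * Q) • (b * u) := by
    nth_rewrite 1 [h1]
    simp only [sub_mul, neg_mul, smul_mul_assoc, hvb, hb2, smul_neg, smul_smul, neg_neg]
  have hD : b * u = (ℓ * ℓ) • (b * u) - (Q * P) • (u * b) := by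
    nth_rewrite 1 [h4]
    simp only [add_mul, neg_mul, smul_mul_assoc, hau, hu2, smul_neg, smul_smul, neg_neg]
    abel
  have hE : (ℓ * ℓ - 1) • (b * u) = (ℓ * ℓ - 1) • (u * b) := by
    rw [mul_comm Q P, hpq] at hD
    linear_combination (norm := module) -hD
  have h5 : (ℓ * ℓ) • (u * b) = (ℓ * ℓ) • (v * a) := by
    rw [hpq] at hA
    rw [hE] at hA
    linear_combination (norm := module) hA
  have hne : (ℓ * ℓ) ≠ 0 := mul_ne_zero hℓ hℓ
  calc u * b = (ℓ*ℓ)⁻¹ • ((ℓ*ℓ) • (u*b)) := (inv_smul_smul₀ hne _).symm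
    _ = (ℓ*ℓ)⁻¹ • ((ℓ*ℓ) • (v*a)) := by rw [h5]
    _ = v * a := inv_smul_smul₀ hne _

/-- §3.2.2: if `ℓ₀₁ ≠ 0`, `ℓ₀₃ ≠ 0`, `ℓ₀₂ = ℓ₀₁ℓ₀₃` and `ξ`
satisfies the Ω-relations, then `ω₀ = ω₁ = ω₂ = ω₃` for
`ω₀ = ξ₀ξ₁ξ₃ξ₂`, `ω₁ = ξ₁ξ₀ξ₂ξ₃`, `ω₂ = ξ₂ξ₃ξ₁ξ₀`, `ω₃ = ξ₃ξ₂ξ₀ξ₁`. -/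
theorem stmt12 {k A : Type*} [Field k] [CharZero k] [Ring A] [Algebra k A]
    (ℓ p : Fin 4 → Fin 4 → k) (hlp : GoodParams ℓ p)
    (h01 : ℓ 0 1 ≠ 0) (h03 : ℓ 0 3 ≠ 0) (h02 : ℓ 0 2 = ℓ 0 1 * ℓ 0 3)
    (ξ : Fin 4 → A) (hξ : OmRel ℓ p ξ) :
    ξ 0 * ξ 1 * ξ 3 * ξ 2 = ξ 1 * ξ 0 * ξ 2 * ξ 3 ∧
    ξ 1 * ξ 0 * ξ 2 * ξ 3 = ξ 2 * ξ 3 * ξ 1 * ξ 0 ∧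
    ξ 2 * ξ 3 * ξ 1 * ξ 0 = ξ 3 * ξ 2 * ξ 0 * ξ 1 := by
  obtain ⟨hdiag, hsymm, hpr, hanti, hcon⟩ := hlp
  -- p is zero on the diagonal
  have hp0 : ∀ μ : Fin 4, p μ μ = 0 := by
    intro μ
    have h := hanti μ μ
    have h2 : (2:k) * p μ μ = 0 := by linear_combination h
    exact (mul_eq_zero.mp h2).resolve_left two_ne_zero
  -- squares vanish
  have hz : ∀ μ : Fin 4, ξ μ * ξ μ = 0 := by
    intro μ
    have h := hξ μ μ
    have hprμ : pr μ μ = (μ, μ) := by fin_cases μ <;> rfl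
    rw [hprμ, hdiag μ, hp0 μ, one_smul, zero_smul, sub_zero] at h
    have h2 : (2:k) • (ξ μ * ξ μ) = 0 := by
      rw [two_smul]
      nth_rewrite 1 [h]
      exact neg_add_cancel _
    have := congrArg (fun x => (2:k)⁻¹ • x) h2
    simpa [inv_smul_smul₀ (two_ne_zero (α := k))] using this
  have zz : ∀ (μ : Fin 4) (x : A), ξ μ * (ξ μ * x) = 0 := fun μ x => by
    rw [← mul_assoc, hz μ, zero_mul]
  have zpair : ∀ α β : Fin 4, (ξ α * ξ β) * (ξ β * ξ α) = 0 := fun α β => by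
    rw [mul_assoc, zz, mul_zero]
  have hMne : ℓ 0 2 ≠ 0 := by rw [h02]; exact mul_ne_zero h01 h03
  -- clean relations
  have r01 : ξ 0 * ξ 1 = -(ℓ 0 1 • (ξ 1 * ξ 0)) - p 0 1 • (ξ 3 * ξ 2) := hξ 0 1
  have r10 : ξ 1 * ξ 0 = -(ℓ 0 1 • (ξ 0 * ξ 1)) + p 0 1 • (ξ 2 * ξ 3) := by
    have h : ξ 1 * ξ 0 = -(ℓ 1 0 • (ξ 0 * ξ 1)) - p 1 0 • (ξ 2 * ξ 3) := hξ 1 0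
    rw [hsymm 1 0, hanti 1 0, neg_smul, sub_neg_eq_add] at h
    exact h
  have r23 : ξ 2 * ξ 3 = -(ℓ 0 1 • (ξ 3 * ξ 2)) - p 2 3 • (ξ 1 * ξ 0) := by
    have h : ξ 2 * ξ 3 = -(ℓ 2 3 • (ξ 3 * ξ 2)) - p 2 3 • (ξ 1 * ξ 0) := hξ 2 3
    rw [show ℓ 2 3 = ℓ 0 1 from hpr 0 1] at h
    exact h
  have r32 : ξ 3 * ξ 2 = -(ℓ 0 1 • (ξ 2 * ξ 3)) + p 2 3 • (ξ 0 * ξ 1) := by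
    have h : ξ 3 * ξ 2 = -(ℓ 3 2 • (ξ 2 * ξ 3)) - p 3 2 • (ξ 0 * ξ 1) := hξ 3 2
    rw [show ℓ 3 2 = ℓ 0 1 from (hsymm 3 2).trans (hpr 0 1), hanti 3 2,
      neg_smul, sub_neg_eq_add] at h
    exact h
  have r02 : ξ 0 * ξ 2 = -(ℓ 0 2 • (ξ 2 * ξ 0)) - p 0 2 • (ξ 3 * ξ 1) := hξ 0 2
  have r20 : ξ 2 * ξ 0 = -(ℓ 0 2 • (ξ 0 * ξ 2)) + p 0 2 • (ξ 1 * ξ 3) := by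
    have h : ξ 2 * ξ 0 = -(ℓ 2 0 • (ξ 0 * ξ 2)) - p 2 0 • (ξ 1 * ξ 3) := hξ 2 0
    rw [hsymm 2 0, hanti 2 0, neg_smul, sub_neg_eq_add] at h
    exact h
  have r13 : ξ 1 * ξ 3 = -(ℓ 0 2 • (ξ 3 * ξ 1)) - p 1 3 • (ξ 2 * ξ 0) := by
    have h : ξ 1 * ξ 3 = -(ℓ 1 3 • (ξ 3 * ξ 1)) - p 1 3 • (ξ 2 * ξ 0) := hξ 1 3
    rw [show ℓ 1 3 = ℓ 0 2 from hpr 0 2] at h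
    exact h
  have r31 : ξ 3 * ξ 1 = -(ℓ 0 2 • (ξ 1 * ξ 3)) + p 1 3 • (ξ 0 * ξ 2) := by
    have h : ξ 3 * ξ 1 = -(ℓ 3 1 • (ξ 1 * ξ 3)) - p 3 1 • (ξ 0 * ξ 2) := hξ 3 1
    rw [show ℓ 3 1 = ℓ 0 2 from (hsymm 3 1).trans (hpr 0 2), hanti 3 1,
      neg_smul, sub_neg_eq_add] at h
    exact h
  have r30 : ξ 3 * ξ 0 = -(ℓ 0 3 • (ξ 0 * ξ 3)) + p 0 3 • (ξ 1 * ξ 2) := by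
    have h : ξ 3 * ξ 0 = -(ℓ 3 0 • (ξ 0 * ξ 3)) - p 3 0 • (ξ 1 * ξ 2) := hξ 3 0
    rw [hsymm 3 0, hanti 3 0, neg_smul, sub_neg_eq_add] at h
    exact h
  have r12 : ξ 1 * ξ 2 = -(ℓ 0 3 • (ξ 2 * ξ 1)) - p 1 2 • (ξ 3 * ξ 0) := by
    have h : ξ 1 * ξ 2 = -(ℓ 1 2 • (ξ 2 * ξ 1)) - p 1 2 • (ξ 3 * ξ 0) := hξ 1 2
    rw [show ℓ 1 2 = ℓ 0 3 from hpr 0 3] at h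
    exact h
  -- constraints
  have hPQ : p 0 1 * p 2 3 = ℓ 0 1 * ℓ 0 1 - 1 := by
    have c1 : ℓ 0 1 ^ 2 + p 0 1 * p 3 2 = 1 := hcon 0 1
    rw [hanti 3 2] at c1
    linear_combination -c1
  have hP2Q2 : p 0 2 * p 1 3 = ℓ 0 2 * ℓ 0 2 - 1 := by
    have c1 : ℓ 0 2 ^ 2 + p 0 2 * p 3 1 = 1 := hcon 0 2
    rw [hanti 3 1] at c1
    linear_combination -c1
  -- family applications
  have famF1 : (ξ 0 * ξ 1) * (ξ 3 * ξ 2) = (ξ 1 * ξ 0) * (ξ 2 * ξ 3) :=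
    fam (ℓ 0 1) (p 0 1) (p 2 3) h01 hPQ _ _ _ _ r01 r10 r23 r32
      (zpair 0 1) (zpair 1 0) (zpair 3 2)
  have famF2 : (ξ 2 * ξ 3) * (ξ 1 * ξ 0) = (ξ 3 * ξ 2) * (ξ 0 * ξ 1) :=
    fam (ℓ 0 1) (p 2 3) (p 0 1) h01 (by rw [mul_comm]; exact hPQ) _ _ _ _
      r23 r32 r01 r10 (zpair 2 3) (zpair 3 2) (zpair 1 0)
  have famG : (ξ 1 * ξ 3) * (ξ 2 * ξ 0) = (ξ 3 * ξ 1) * (ξ 0 * ξ 2) :=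
    fam (ℓ 0 2) (p 1 3) (p 0 2) hMne (by rw [mul_comm]; exact hP2Q2) _ _ _ _
      r13 r31 r02 r20 (zpair 1 3) (zpair 3 1) (zpair 2 0)
  -- derived products
  have hvb : (ξ 1 * ξ 0) * (ξ 3 * ξ 2) = -(ℓ 0 1 • ((ξ 1 * ξ 0) * (ξ 2 * ξ 3))) := by
    rw [r32]
    simp only [mul_add, mul_neg, mul_smul_comm, mul_assoc, zz, mul_zero, smul_zero, add_zero]
  have hbv : (ξ 3 * ξ 2) * (ξ 1 * ξ 0) = -(ℓ 0 1 • ((ξ 2 * ξ 3) * (ξ 1 * ξ 0))) := by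
    rw [r32]
    simp only [add_mul, neg_mul, smul_mul_assoc, mul_assoc, zz, mul_zero, smul_zero, add_zero]
  have hdc : (ξ 1 * ξ 3) * (ξ 0 * ξ 2) = -(ℓ 0 2 • ((ξ 3 * ξ 1) * (ξ 0 * ξ 2))) := by
    rw [r13]
    simp only [sub_mul, neg_mul, smul_mul_assoc, mul_assoc, zz, mul_zero, smul_zero,
      neg_zero, sub_zero]
  have hd'c' : (ξ 3 * ξ 1) * (ξ 2 * ξ 0) = -(ℓ 0 2 • ((ξ 1 * ξ 3) * (ξ 2 * ξ 0))) := by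
    rw [r31]
    simp only [add_mul, neg_mul, smul_mul_assoc, mul_assoc, zz, mul_zero, smul_zero, add_zero]
  have hdc2 : (ξ 1 * ξ 3) * (ξ 0 * ξ 2)
      = (ℓ 0 3 * ℓ 0 1) • ((ξ 1 * ξ 0) * (ξ 2 * ξ 3)) := by
    have e : (ξ 1 * ξ 3) * (ξ 0 * ξ 2) = ξ 1 * (ξ 3 * ξ 0) * ξ 2 := by
      simp only [mul_assoc]
    rw [e, r30]
    simp only [mul_add, add_mul, mul_neg, neg_mul, mul_smul_comm, smul_mul_assoc,
      mul_assoc, zz, mul_zero, smul_zero, neg_zero, add_zero, zero_add]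
    rw [show ξ 1 * (ξ 0 * (ξ 3 * ξ 2)) = (ξ 1 * ξ 0) * (ξ 3 * ξ 2) from (mul_assoc _ _ _).symm,
      hvb]
    simp only [smul_neg, neg_neg, smul_smul, mul_assoc]
  have hd'c'2 : (ξ 3 * ξ 1) * (ξ 2 * ξ 0)
      = (ℓ 0 3 * ℓ 0 1) • ((ξ 2 * ξ 3) * (ξ 1 * ξ 0)) := by
    have e : (ξ 3 * ξ 1) * (ξ 2 * ξ 0) = ξ 3 * (ξ 1 * ξ 2) * ξ 0 := by
      simp only [mul_assoc]
    rw [e, r12]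
    simp only [mul_sub, sub_mul, mul_neg, neg_mul, mul_smul_comm, smul_mul_assoc,
      mul_assoc, zz, mul_zero, smul_zero, neg_zero, sub_zero]
    rw [show ξ 3 * (ξ 2 * (ξ 1 * ξ 0)) = (ξ 3 * ξ 2) * (ξ 1 * ξ 0) from (mul_assoc _ _ _).symm,
      hbv]
    simp only [smul_neg, neg_neg, smul_smul, mul_assoc]
  -- conclude ω₁ = ω₂
  have key : (ℓ 0 3 * ℓ 0 1) • ((ξ 1 * ξ 0) * (ξ 2 * ξ 3))
      = (ℓ 0 3 * ℓ 0 1) • ((ξ 2 * ξ 3) * (ξ 1 * ξ 0)) := by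
    rw [← hdc2, ← hd'c'2, hdc, hd'c', famG]
  have hNL : (ℓ 0 3 * ℓ 0 1) ≠ 0 := mul_ne_zero h03 h01
  have keyc : (ξ 1 * ξ 0) * (ξ 2 * ξ 3) = (ξ 2 * ξ 3) * (ξ 1 * ξ 0) := by
    calc (ξ 1 * ξ 0) * (ξ 2 * ξ 3)
        = (ℓ 0 3 * ℓ 0 1)⁻¹ • ((ℓ 0 3 * ℓ 0 1) • ((ξ 1 * ξ 0) * (ξ 2 * ξ 3))) :=
          (inv_smul_smul₀ hNL _).symm
      _ = (ℓ 0 3 * ℓ 0 1)⁻¹ • ((ℓ 0 3 * ℓ 0 1) • ((ξ 2 * ξ 3) * (ξ 1 * ξ 0))) := by rw [key]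
      _ = (ξ 2 * ξ 3) * (ξ 1 * ξ 0) := inv_smul_smul₀ hNL _
  refine ⟨?_, ?_, ?_⟩
  · rw [mul_assoc (ξ 0 * ξ 1) (ξ 3) (ξ 2), mul_assoc (ξ 1 * ξ 0) (ξ 2) (ξ 3)]
    exact famF1
  · rw [mul_assoc (ξ 1 * ξ 0) (ξ 2) (ξ 3), mul_assoc (ξ 2 * ξ 3) (ξ 1) (ξ 0)]
    exact keyc
  · rw [mul_assoc (ξ 2 * ξ 3) (ξ 1) (ξ 0), mul_assoc (ξ 3 * ξ 2) (ξ 0) (ξ 1)]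
    exact famF2
end

section
/- Assume ℓ₀₁ ≠ 0, ℓ₀₃ ≠ 0 and ℓ₀₂ = ℓ₀₁ ℓ₀₃. Let A be a unital associative k-algebra and suppose ξ : {0,1,2,3} → A satisfies the Ω-relations. For each ν ∈ {0,1,2,3} set θ_ν := ξ_{ν̃} ξ_{μ̃_ν} ξ_{μ_ν}, and set ω := ξ₀ ξ₁ ξ₃ ξ₂. Then for every ν: ξ_ν θ_ν = ω and θ_ν ξ_ν = −ω; in particular θ_ν ξ_ν = −ξ_ν θ_ν. -/
/-- §3.2.2: with `θ_ν := ξ_{ν̃} ξ_{μ̃_ν} ξ_{μ_ν}` and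
`ω := ξ₀ξ₁ξ₃ξ₂`, for every `ν`: `ξ_ν θ_ν = ω`, `θ_ν ξ_ν = −ω`, and in
particular `θ_ν ξ_ν = −ξ_ν θ_ν`. -/
theorem stmt13 {k A : Type*} [Field k] [CharZero k] [Ring A] [Algebra k A]
    (ℓ p : Fin 4 → Fin 4 → k) (hlp : GoodParams ℓ p)
    (h01 : ℓ 0 1 ≠ 0) (h03 : ℓ 0 3 ≠ 0) (h02 : ℓ 0 2 = ℓ 0 1 * ℓ 0 3)
    (ξ : Fin 4 → A) (hξ : OmRel ℓ p ξ) :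
    ∀ ν : Fin 4,
      ξ ν * (ξ (tnu ν).1 * ξ (tnu ν).2.2 * ξ (tnu ν).2.1) =
        ξ 0 * ξ 1 * ξ 3 * ξ 2 ∧
      (ξ (tnu ν).1 * ξ (tnu ν).2.2 * ξ (tnu ν).2.1) * ξ ν =
        -(ξ 0 * ξ 1 * ξ 3 * ξ 2) ∧
      (ξ (tnu ν).1 * ξ (tnu ν).2.2 * ξ (tnu ν).2.1) * ξ ν =
        -(ξ ν * (ξ (tnu ν).1 * ξ (tnu ν).2.2 * ξ (tnu ν).2.1)) := by
  obtain ⟨hl1, hl2, hl3, hp, hq⟩ := hlp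
  have hcl : ∀ u : k, u ≠ 0 → ∀ x y : A, u • x = u • y → x = y := by
    intro u hu x y h
    calc x = (u⁻¹ * u) • x := by rw [inv_mul_cancel₀ hu, one_smul]
    _ = u⁻¹ • u • x := by rw [mul_smul]
    _ = u⁻¹ • u • y := by rw [h]
    _ = (u⁻¹ * u) • y := by rw [mul_smul]
    _ = y := by rw [inv_mul_cancel₀ hu, one_smul]
  have lp12 : ℓ 1 2 = ℓ 0 3 := hl3 0 3
  have lp13 : ℓ 1 3 = ℓ 0 1 * ℓ 0 3 := by have h := hl3 0 2; rw [h02] at h; exact h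
  have lp23 : ℓ 2 3 = ℓ 0 1 := hl3 0 1
  have q1 : p 0 1 * p 2 3 = ℓ 0 1 ^ 2 - 1 := by
    have h := hq 0 1
    rw [show p (pr 0 1).2 (pr 0 1).1 = p 3 2 from rfl] at h
    linear_combination (-1 : k) * h + p 0 1 * hp 3 2
  have q2 : p 0 2 * p 1 3 = (ℓ 0 1 * ℓ 0 3) ^ 2 - 1 := by
    have h := hq 0 2
    rw [show p (pr 0 2).2 (pr 0 2).1 = p 3 1 from rfl] at h
    linear_combination (-1 : k) * h + p 0 2 * hp 3 1 + (ℓ 0 2 + ℓ 0 1 * ℓ 0 3) * h02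
  have q3 : p 0 3 * p 1 2 = ℓ 0 3 ^ 2 - 1 := by
    have h := hq 0 3
    rw [show p (pr 0 3).2 (pr 0 3).1 = p 2 1 from rfl] at h
    linear_combination (-1 : k) * h + p 0 3 * hp 2 1
  have hpz : ∀ i : Fin 4, p i i = 0 := fun i => by have h := hp i i; linear_combination h / 2
  have sq : ∀ i : Fin 4, ξ i * ξ i = 0 := by
    intro i
    have h := hξ i i
    rw [show ξ (pr i i).2 * ξ (pr i i).1 = ξ i * ξ i from by
      congr 1 <;> · congr 1 <;> fin_cases i <;> rfl] at h
    rw [hl1 i, hpz i, one_smul, zero_smul, sub_zero] at h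
    have h2 : (2 : k) • (ξ i * ξ i) = 0 := by
      rw [two_smul]
      nth_rewrite 2 [h]
      simp
    calc ξ i * ξ i = ((2 : k)⁻¹ * 2) • (ξ i * ξ i) := by norm_num
    _ = (2 : k)⁻¹ • ((2 : k) • (ξ i * ξ i)) := by rw [mul_smul]
    _ = 0 := by rw [h2, smul_zero]
  have gsq : ∀ (i : Fin 4) (y : A), ξ i * (ξ i * y) = 0 := fun i y => by
    rw [← mul_assoc, sq i, zero_mul]
  have r01 : ξ 0 * ξ 1 = -(ℓ 0 1 • (ξ 1 * ξ 0)) - p 0 1 • (ξ 3 * ξ 2) := by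
    have h := hξ 0 1; exact h
  have g01 : ∀ y : A, ξ 0 * (ξ 1 * y) = -(ℓ 0 1 • (ξ 1 * (ξ 0 * y))) - p 0 1 • (ξ 3 * (ξ 2 * y)) := by
    intro y; rw [← mul_assoc, r01]
    simp only [sub_mul, neg_mul, smul_mul_assoc, mul_assoc]
  have r02 : ξ 0 * ξ 2 = -((ℓ 0 1 * ℓ 0 3) • (ξ 2 * ξ 0)) - p 0 2 • (ξ 3 * ξ 1) := by
    have h := hξ 0 2; rw [h02] at h; exact h
  have g02 : ∀ y : A, ξ 0 * (ξ 2 * y) = -((ℓ 0 1 * ℓ 0 3) • (ξ 2 * (ξ 0 * y))) - p 0 2 • (ξ 3 * (ξ 1 * y)) := by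
    intro y; rw [← mul_assoc, r02]
    simp only [sub_mul, neg_mul, smul_mul_assoc, mul_assoc]
  have r03 : ξ 0 * ξ 3 = -(ℓ 0 3 • (ξ 3 * ξ 0)) - p 0 3 • (ξ 2 * ξ 1) := by
    have h := hξ 0 3; exact h
  have g03 : ∀ y : A, ξ 0 * (ξ 3 * y) = -(ℓ 0 3 • (ξ 3 * (ξ 0 * y))) - p 0 3 • (ξ 2 * (ξ 1 * y)) := by
    intro y; rw [← mul_assoc, r03]
    simp only [sub_mul, neg_mul, smul_mul_assoc, mul_assoc]
  have r10 : ξ 1 * ξ 0 = -(ℓ 0 1 • (ξ 0 * ξ 1)) - (-p 0 1) • (ξ 2 * ξ 3) := by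
    have h := hξ 1 0; rw [hl2 1 0, hp 1 0] at h; exact h
  have g10 : ∀ y : A, ξ 1 * (ξ 0 * y) = -(ℓ 0 1 • (ξ 0 * (ξ 1 * y))) - (-p 0 1) • (ξ 2 * (ξ 3 * y)) := by
    intro y; rw [← mul_assoc, r10]
    simp only [sub_mul, neg_mul, smul_mul_assoc, mul_assoc]
  have r12 : ξ 1 * ξ 2 = -(ℓ 0 3 • (ξ 2 * ξ 1)) - p 1 2 • (ξ 3 * ξ 0) := by
    have h := hξ 1 2; rw [lp12] at h; exact h
  have g12 : ∀ y : A, ξ 1 * (ξ 2 * y) = -(ℓ 0 3 • (ξ 2 * (ξ 1 * y))) - p 1 2 • (ξ 3 * (ξ 0 * y)) := by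
    intro y; rw [← mul_assoc, r12]
    simp only [sub_mul, neg_mul, smul_mul_assoc, mul_assoc]
  have r13 : ξ 1 * ξ 3 = -((ℓ 0 1 * ℓ 0 3) • (ξ 3 * ξ 1)) - p 1 3 • (ξ 2 * ξ 0) := by
    have h := hξ 1 3; rw [lp13] at h; exact h
  have g13 : ∀ y : A, ξ 1 * (ξ 3 * y) = -((ℓ 0 1 * ℓ 0 3) • (ξ 3 * (ξ 1 * y))) - p 1 3 • (ξ 2 * (ξ 0 * y)) := by
    intro y; rw [← mul_assoc, r13]
    simp only [sub_mul, neg_mul, smul_mul_assoc, mul_assoc]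
  have r20 : ξ 2 * ξ 0 = -((ℓ 0 1 * ℓ 0 3) • (ξ 0 * ξ 2)) - (-p 0 2) • (ξ 1 * ξ 3) := by
    have h := hξ 2 0; rw [hl2 2 0, h02, hp 2 0] at h; exact h
  have g20 : ∀ y : A, ξ 2 * (ξ 0 * y) = -((ℓ 0 1 * ℓ 0 3) • (ξ 0 * (ξ 2 * y))) - (-p 0 2) • (ξ 1 * (ξ 3 * y)) := by
    intro y; rw [← mul_assoc, r20]
    simp only [sub_mul, neg_mul, smul_mul_assoc, mul_assoc]
  have r21 : ξ 2 * ξ 1 = -(ℓ 0 3 • (ξ 1 * ξ 2)) - (-p 1 2) • (ξ 0 * ξ 3) := by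
    have h := hξ 2 1; rw [hl2 2 1, lp12, hp 2 1] at h; exact h
  have g21 : ∀ y : A, ξ 2 * (ξ 1 * y) = -(ℓ 0 3 • (ξ 1 * (ξ 2 * y))) - (-p 1 2) • (ξ 0 * (ξ 3 * y)) := by
    intro y; rw [← mul_assoc, r21]
    simp only [sub_mul, neg_mul, smul_mul_assoc, mul_assoc]
  have r23 : ξ 2 * ξ 3 = -(ℓ 0 1 • (ξ 3 * ξ 2)) - p 2 3 • (ξ 1 * ξ 0) := by
    have h := hξ 2 3; rw [lp23] at h; exact h
  have g23 : ∀ y : A, ξ 2 * (ξ 3 * y) = -(ℓ 0 1 • (ξ 3 * (ξ 2 * y))) - p 2 3 • (ξ 1 * (ξ 0 * y)) := by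
    intro y; rw [← mul_assoc, r23]
    simp only [sub_mul, neg_mul, smul_mul_assoc, mul_assoc]
  have r30 : ξ 3 * ξ 0 = -(ℓ 0 3 • (ξ 0 * ξ 3)) - (-p 0 3) • (ξ 1 * ξ 2) := by
    have h := hξ 3 0; rw [hl2 3 0, hp 3 0] at h; exact h
  have g30 : ∀ y : A, ξ 3 * (ξ 0 * y) = -(ℓ 0 3 • (ξ 0 * (ξ 3 * y))) - (-p 0 3) • (ξ 1 * (ξ 2 * y)) := by
    intro y; rw [← mul_assoc, r30]
    simp only [sub_mul, neg_mul, smul_mul_assoc, mul_assoc]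
  have r31 : ξ 3 * ξ 1 = -((ℓ 0 1 * ℓ 0 3) • (ξ 1 * ξ 3)) - (-p 1 3) • (ξ 0 * ξ 2) := by
    have h := hξ 3 1; rw [hl2 3 1, lp13, hp 3 1] at h; exact h
  have g31 : ∀ y : A, ξ 3 * (ξ 1 * y) = -((ℓ 0 1 * ℓ 0 3) • (ξ 1 * (ξ 3 * y))) - (-p 1 3) • (ξ 0 * (ξ 2 * y)) := by
    intro y; rw [← mul_assoc, r31]
    simp only [sub_mul, neg_mul, smul_mul_assoc, mul_assoc]
  have r32 : ξ 3 * ξ 2 = -(ℓ 0 1 • (ξ 2 * ξ 3)) - (-p 2 3) • (ξ 0 * ξ 1) := by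
    have h := hξ 3 2; rw [hl2 3 2, lp23, hp 3 2] at h; exact h
  have g32 : ∀ y : A, ξ 3 * (ξ 2 * y) = -(ℓ 0 1 • (ξ 2 * (ξ 3 * y))) - (-p 2 3) • (ξ 0 * (ξ 1 * y)) := by
    intro y; rw [← mul_assoc, r32]
    simp only [sub_mul, neg_mul, smul_mul_assoc, mul_assoc]
  have keycW1 : ξ 1 * (ξ 3 * (ξ 2 * (ξ 0))) = ((-1 : k) * p 0 2 * p 1 3) • (ξ 1 * (ξ 3 * (ξ 2 * (ξ 0)))) + ((1 : k) * ℓ 0 1 * ℓ 0 3 ^ 2) • (ξ 3 * (ξ 2 * (ξ 1 * (ξ 0)))) := by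
    conv_lhs => rw [g13 (ξ 2 * (ξ 0))]
    try simp only [mul_sub, mul_neg, mul_smul_comm, smul_sub, smul_neg, smul_smul, sq, gsq, mul_zero, smul_zero, neg_zero, sub_zero, zero_sub, add_zero, zero_add, neg_neg]
    conv_lhs => rw [g20 (ξ 2 * (ξ 0))]
    try simp only [mul_sub, mul_neg, mul_smul_comm, smul_sub, smul_neg, smul_smul, sq, gsq, mul_zero, smul_zero, neg_zero, sub_zero, zero_sub, add_zero, zero_add, neg_neg]
    conv_lhs => rw [g12 (ξ 0)]
    try simp only [mul_sub, mul_neg, mul_smul_comm, smul_sub, smul_neg, smul_smul, sq, gsq, mul_zero, smul_zero, neg_zero, sub_zero, zero_sub, add_zero, zero_add, neg_neg]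
    module
  have stpcW1 : ((1 : k) - ((-1 : k) * p 0 2 * p 1 3)) • (ξ 1 * (ξ 3 * (ξ 2 * (ξ 0)))) = ((1 : k) * ℓ 0 1 * ℓ 0 3 ^ 2) • (ξ 3 * (ξ 2 * (ξ 1 * (ξ 0)))) := by
    rw [sub_smul, one_smul]
    nth_rewrite 1 [keycW1]
    module
  have e1cW1 : (1 : k) - ((-1 : k) * p 0 2 * p 1 3) = (ℓ 0 1 * (ℓ 0 3 * ℓ 0 3)) * ℓ 0 1 := by linear_combination ((1 : k)) * q2
  have e2cW1 : ((1 : k) * ℓ 0 1 * ℓ 0 3 ^ 2) = (ℓ 0 1 * (ℓ 0 3 * ℓ 0 3)) * (1 : k) := by linear_combination (0 : k) * q1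
  have stqcW1 : (ℓ 0 1 * (ℓ 0 3 * ℓ 0 3)) • (ℓ 0 1 • (ξ 1 * (ξ 3 * (ξ 2 * (ξ 0))))) = (ℓ 0 1 * (ℓ 0 3 * ℓ 0 3)) • ((1 : k) • (ξ 3 * (ξ 2 * (ξ 1 * (ξ 0))))) := by
    rw [smul_smul, smul_smul, ← e1cW1, ← e2cW1]
    exact stpcW1
  have cW1 : ℓ 0 1 • (ξ 1 * (ξ 3 * (ξ 2 * (ξ 0)))) = (1 : k) • (ξ 3 * (ξ 2 * (ξ 1 * (ξ 0)))) := hcl (ℓ 0 1 * (ℓ 0 3 * ℓ 0 3)) (mul_ne_zero h01 (mul_ne_zero h03 h03)) _ _ stqcW1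
  have keycW2 : ξ 2 * (ξ 3 * (ξ 1 * (ξ 0))) = ((-1 : k) * p 0 1 * p 2 3) • (ξ 2 * (ξ 3 * (ξ 1 * (ξ 0)))) + ((-1 : k) * ℓ 0 1) • (ξ 3 * (ξ 2 * (ξ 1 * (ξ 0)))) := by
    conv_lhs => rw [g23 (ξ 1 * (ξ 0))]
    try simp only [mul_sub, mul_neg, mul_smul_comm, smul_sub, smul_neg, smul_smul, sq, gsq, mul_zero, smul_zero, neg_zero, sub_zero, zero_sub, add_zero, zero_add, neg_neg]
    conv_lhs => rw [g10 (ξ 1 * (ξ 0))]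
    try simp only [mul_sub, mul_neg, mul_smul_comm, smul_sub, smul_neg, smul_smul, sq, gsq, mul_zero, smul_zero, neg_zero, sub_zero, zero_sub, add_zero, zero_add, neg_neg]
    module
  have stpcW2 : ((1 : k) - ((-1 : k) * p 0 1 * p 2 3)) • (ξ 2 * (ξ 3 * (ξ 1 * (ξ 0)))) = ((-1 : k) * ℓ 0 1) • (ξ 3 * (ξ 2 * (ξ 1 * (ξ 0)))) := by
    rw [sub_smul, one_smul]
    nth_rewrite 1 [keycW2]
    module
  have e1cW2 : (1 : k) - ((-1 : k) * p 0 1 * p 2 3) = (ℓ 0 1) * ℓ 0 1 := by linear_combination ((1 : k)) * q1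
  have e2cW2 : ((-1 : k) * ℓ 0 1) = (ℓ 0 1) * (-1 : k) := by linear_combination (0 : k) * q1
  have stqcW2 : (ℓ 0 1) • (ℓ 0 1 • (ξ 2 * (ξ 3 * (ξ 1 * (ξ 0))))) = (ℓ 0 1) • ((-1 : k) • (ξ 3 * (ξ 2 * (ξ 1 * (ξ 0))))) := by
    rw [smul_smul, smul_smul, ← e1cW2, ← e2cW2]
    exact stpcW2
  have cW2 : ℓ 0 1 • (ξ 2 * (ξ 3 * (ξ 1 * (ξ 0)))) = (-1 : k) • (ξ 3 * (ξ 2 * (ξ 1 * (ξ 0)))) := hcl (ℓ 0 1) (h01) _ _ stqcW2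
  have keycW3 : ξ 3 * (ξ 1 * (ξ 0 * (ξ 2))) = ((-1 : k) * p 0 2 * p 1 3) • (ξ 3 * (ξ 1 * (ξ 0 * (ξ 2)))) + ((1 : k) * ℓ 0 1 * ℓ 0 3 ^ 2) • (ξ 3 * (ξ 2 * (ξ 1 * (ξ 0)))) := by
    conv_lhs => rw [r02]
    try simp only [mul_sub, mul_neg, mul_smul_comm, smul_sub, smul_neg, smul_smul, sq, gsq, mul_zero, smul_zero, neg_zero, sub_zero, zero_sub, add_zero, zero_add, neg_neg]
    conv_lhs => rw [g12 (ξ 0)]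
    try simp only [mul_sub, mul_neg, mul_smul_comm, smul_sub, smul_neg, smul_smul, sq, gsq, mul_zero, smul_zero, neg_zero, sub_zero, zero_sub, add_zero, zero_add, neg_neg]
    conv_lhs => rw [r31]
    try simp only [mul_sub, mul_neg, mul_smul_comm, smul_sub, smul_neg, smul_smul, sq, gsq, mul_zero, smul_zero, neg_zero, sub_zero, zero_sub, add_zero, zero_add, neg_neg]
    module
  have stpcW3 : ((1 : k) - ((-1 : k) * p 0 2 * p 1 3)) • (ξ 3 * (ξ 1 * (ξ 0 * (ξ 2)))) = ((1 : k) * ℓ 0 1 * ℓ 0 3 ^ 2) • (ξ 3 * (ξ 2 * (ξ 1 * (ξ 0)))) := by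
    rw [sub_smul, one_smul]
    nth_rewrite 1 [keycW3]
    module
  have e1cW3 : (1 : k) - ((-1 : k) * p 0 2 * p 1 3) = (ℓ 0 1 * (ℓ 0 3 * ℓ 0 3)) * ℓ 0 1 := by linear_combination ((1 : k)) * q2
  have e2cW3 : ((1 : k) * ℓ 0 1 * ℓ 0 3 ^ 2) = (ℓ 0 1 * (ℓ 0 3 * ℓ 0 3)) * (1 : k) := by linear_combination (0 : k) * q1
  have stqcW3 : (ℓ 0 1 * (ℓ 0 3 * ℓ 0 3)) • (ℓ 0 1 • (ξ 3 * (ξ 1 * (ξ 0 * (ξ 2))))) = (ℓ 0 1 * (ℓ 0 3 * ℓ 0 3)) • ((1 : k) • (ξ 3 * (ξ 2 * (ξ 1 * (ξ 0))))) := by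
    rw [smul_smul, smul_smul, ← e1cW3, ← e2cW3]
    exact stpcW3
  have cW3 : ℓ 0 1 • (ξ 3 * (ξ 1 * (ξ 0 * (ξ 2)))) = (1 : k) • (ξ 3 * (ξ 2 * (ξ 1 * (ξ 0)))) := hcl (ℓ 0 1 * (ℓ 0 3 * ℓ 0 3)) (mul_ne_zero h01 (mul_ne_zero h03 h03)) _ _ stqcW3
  have keycW4 : ξ 3 * (ξ 2 * (ξ 0 * (ξ 1))) = ((-1 : k) * p 0 1 * p 2 3) • (ξ 3 * (ξ 2 * (ξ 0 * (ξ 1)))) + ((-1 : k) * ℓ 0 1) • (ξ 3 * (ξ 2 * (ξ 1 * (ξ 0)))) := by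
    conv_lhs => rw [r01]
    try simp only [mul_sub, mul_neg, mul_smul_comm, smul_sub, smul_neg, smul_smul, sq, gsq, mul_zero, smul_zero, neg_zero, sub_zero, zero_sub, add_zero, zero_add, neg_neg]
    conv_lhs => rw [r32]
    try simp only [mul_sub, mul_neg, mul_smul_comm, smul_sub, smul_neg, smul_smul, sq, gsq, mul_zero, smul_zero, neg_zero, sub_zero, zero_sub, add_zero, zero_add, neg_neg]
    module
  have stpcW4 : ((1 : k) - ((-1 : k) * p 0 1 * p 2 3)) • (ξ 3 * (ξ 2 * (ξ 0 * (ξ 1)))) = ((-1 : k) * ℓ 0 1) • (ξ 3 * (ξ 2 * (ξ 1 * (ξ 0)))) := by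
    rw [sub_smul, one_smul]
    nth_rewrite 1 [keycW4]
    module
  have e1cW4 : (1 : k) - ((-1 : k) * p 0 1 * p 2 3) = (ℓ 0 1) * ℓ 0 1 := by linear_combination ((1 : k)) * q1
  have e2cW4 : ((-1 : k) * ℓ 0 1) = (ℓ 0 1) * (-1 : k) := by linear_combination (0 : k) * q1
  have stqcW4 : (ℓ 0 1) • (ℓ 0 1 • (ξ 3 * (ξ 2 * (ξ 0 * (ξ 1))))) = (ℓ 0 1) • ((-1 : k) • (ξ 3 * (ξ 2 * (ξ 1 * (ξ 0))))) := by
    rw [smul_smul, smul_smul, ← e1cW4, ← e2cW4]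
    exact stpcW4
  have cW4 : ℓ 0 1 • (ξ 3 * (ξ 2 * (ξ 0 * (ξ 1)))) = (-1 : k) • (ξ 3 * (ξ 2 * (ξ 1 * (ξ 0)))) := hcl (ℓ 0 1) (h01) _ _ stqcW4
  have keycO : ξ 0 * (ξ 1 * (ξ 3 * (ξ 2))) = (0 : k) • (ξ 0 * (ξ 1 * (ξ 3 * (ξ 2)))) + ((1 : k) * p 0 2 * p 1 3 + (-1 : k) * ℓ 0 1 ^ 2 * ℓ 0 3 ^ 2) • (ξ 3 * (ξ 1 * (ξ 0 * (ξ 2)))) := by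
    conv_lhs => rw [g13 (ξ 2)]
    try simp only [mul_sub, mul_neg, mul_smul_comm, smul_sub, smul_neg, smul_smul, sq, gsq, mul_zero, smul_zero, neg_zero, sub_zero, zero_sub, add_zero, zero_add, neg_neg]
    conv_lhs => rw [g02 (ξ 0 * (ξ 2))]
    try simp only [mul_sub, mul_neg, mul_smul_comm, smul_sub, smul_neg, smul_smul, sq, gsq, mul_zero, smul_zero, neg_zero, sub_zero, zero_sub, add_zero, zero_add, neg_neg]
    conv_lhs => rw [g03 (ξ 1 * (ξ 2))]
    try simp only [mul_sub, mul_neg, mul_smul_comm, smul_sub, smul_neg, smul_smul, sq, gsq, mul_zero, smul_zero, neg_zero, sub_zero, zero_sub, add_zero, zero_add, neg_neg]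
    conv_lhs => rw [g01 (ξ 2)]
    try simp only [mul_sub, mul_neg, mul_smul_comm, smul_sub, smul_neg, smul_smul, sq, gsq, mul_zero, smul_zero, neg_zero, sub_zero, zero_sub, add_zero, zero_add, neg_neg]
    module
  have stpcO : ((1 : k) - (0 : k)) • (ξ 0 * (ξ 1 * (ξ 3 * (ξ 2)))) = ((1 : k) * p 0 2 * p 1 3 + (-1 : k) * ℓ 0 1 ^ 2 * ℓ 0 3 ^ 2) • (ξ 3 * (ξ 1 * (ξ 0 * (ξ 2)))) + (0 : k) • (ξ 3 * (ξ 2 * (ξ 1 * (ξ 0)))) := by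
    rw [sub_smul, one_smul]
    nth_rewrite 1 [keycO]
    module
  have honecO : (1 : k) - (0 : k) = 1 := by linear_combination (0 : k) * q1
  rw [honecO, one_smul] at stpcO
  have cO : ℓ 0 1 • (ξ 0 * (ξ 1 * (ξ 3 * (ξ 2)))) = (-1 : k) • (ξ 3 * (ξ 2 * (ξ 1 * (ξ 0)))) := by
    rw [stpcO, smul_add, smul_smul, smul_smul, mul_comm (ℓ 0 1) ((1 : k) * p 0 2 * p 1 3 + (-1 : k) * ℓ 0 1 ^ 2 * ℓ 0 3 ^ 2), mul_smul, cW3, smul_smul, ← add_smul]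
    have hco : ((1 : k) * p 0 2 * p 1 3 + (-1 : k) * ℓ 0 1 ^ 2 * ℓ 0 3 ^ 2) * (1 : k) + ℓ 0 1 * (0 : k) = (-1 : k) := by linear_combination ((1 : k)) * q2
    rw [hco]
  have keycX1 : ξ 1 * (ξ 0 * (ξ 2 * (ξ 3))) = (0 : k) • (ξ 1 * (ξ 0 * (ξ 2 * (ξ 3)))) + ((1 : k) * p 0 2 * p 1 3 + (-1 : k) * ℓ 0 1 ^ 2 * ℓ 0 3 ^ 2) • (ξ 1 * (ξ 3 * (ξ 2 * (ξ 0)))) := by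
    conv_lhs => rw [g02 (ξ 3)]
    try simp only [mul_sub, mul_neg, mul_smul_comm, smul_sub, smul_neg, smul_smul, sq, gsq, mul_zero, smul_zero, neg_zero, sub_zero, zero_sub, add_zero, zero_add, neg_neg]
    conv_lhs => rw [r13]
    try simp only [mul_sub, mul_neg, mul_smul_comm, smul_sub, smul_neg, smul_smul, sq, gsq, mul_zero, smul_zero, neg_zero, sub_zero, zero_sub, add_zero, zero_add, neg_neg]
    conv_lhs => rw [r03]
    try simp only [mul_sub, mul_neg, mul_smul_comm, smul_sub, smul_neg, smul_smul, sq, gsq, mul_zero, smul_zero, neg_zero, sub_zero, zero_sub, add_zero, zero_add, neg_neg]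
    conv_lhs => rw [g23 (ξ 0)]
    try simp only [mul_sub, mul_neg, mul_smul_comm, smul_sub, smul_neg, smul_smul, sq, gsq, mul_zero, smul_zero, neg_zero, sub_zero, zero_sub, add_zero, zero_add, neg_neg]
    module
  have stpcX1 : ((1 : k) - (0 : k)) • (ξ 1 * (ξ 0 * (ξ 2 * (ξ 3)))) = ((1 : k) * p 0 2 * p 1 3 + (-1 : k) * ℓ 0 1 ^ 2 * ℓ 0 3 ^ 2) • (ξ 1 * (ξ 3 * (ξ 2 * (ξ 0)))) + (0 : k) • (ξ 3 * (ξ 2 * (ξ 1 * (ξ 0)))) := by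
    rw [sub_smul, one_smul]
    nth_rewrite 1 [keycX1]
    module
  have honecX1 : (1 : k) - (0 : k) = 1 := by linear_combination (0 : k) * q1
  rw [honecX1, one_smul] at stpcX1
  have cX1 : ℓ 0 1 • (ξ 1 * (ξ 0 * (ξ 2 * (ξ 3)))) = (-1 : k) • (ξ 3 * (ξ 2 * (ξ 1 * (ξ 0)))) := by
    rw [stpcX1, smul_add, smul_smul, smul_smul, mul_comm (ℓ 0 1) ((1 : k) * p 0 2 * p 1 3 + (-1 : k) * ℓ 0 1 ^ 2 * ℓ 0 3 ^ 2), mul_smul, cW1, smul_smul, ← add_smul]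
    have hco : ((1 : k) * p 0 2 * p 1 3 + (-1 : k) * ℓ 0 1 ^ 2 * ℓ 0 3 ^ 2) * (1 : k) + ℓ 0 1 * (0 : k) = (-1 : k) := by linear_combination ((1 : k)) * q2
    rw [hco]
  have keycT1 : ξ 0 * (ξ 2 * (ξ 3 * (ξ 1))) = (0 : k) • (ξ 0 * (ξ 2 * (ξ 3 * (ξ 1)))) + ((1 : k) * p 0 2 * p 1 3 + (-1 : k) * ℓ 0 1 ^ 2 * ℓ 0 3 ^ 2) • (ξ 3 * (ξ 2 * (ξ 0 * (ξ 1)))) := by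
    conv_lhs => rw [g02 (ξ 3 * (ξ 1))]
    try simp only [mul_sub, mul_neg, mul_smul_comm, smul_sub, smul_neg, smul_smul, sq, gsq, mul_zero, smul_zero, neg_zero, sub_zero, zero_sub, add_zero, zero_add, neg_neg]
    conv_lhs => rw [g13 (ξ 1)]
    try simp only [mul_sub, mul_neg, mul_smul_comm, smul_sub, smul_neg, smul_smul, sq, gsq, mul_zero, smul_zero, neg_zero, sub_zero, zero_sub, add_zero, zero_add, neg_neg]
    conv_lhs => rw [g03 (ξ 1)]
    try simp only [mul_sub, mul_neg, mul_smul_comm, smul_sub, smul_neg, smul_smul, sq, gsq, mul_zero, smul_zero, neg_zero, sub_zero, zero_sub, add_zero, zero_add, neg_neg]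
    conv_lhs => rw [g23 (ξ 0 * (ξ 1))]
    try simp only [mul_sub, mul_neg, mul_smul_comm, smul_sub, smul_neg, smul_smul, sq, gsq, mul_zero, smul_zero, neg_zero, sub_zero, zero_sub, add_zero, zero_add, neg_neg]
    module
  have stpcT1 : ((1 : k) - (0 : k)) • (ξ 0 * (ξ 2 * (ξ 3 * (ξ 1)))) = ((1 : k) * p 0 2 * p 1 3 + (-1 : k) * ℓ 0 1 ^ 2 * ℓ 0 3 ^ 2) • (ξ 3 * (ξ 2 * (ξ 0 * (ξ 1)))) + (0 : k) • (ξ 3 * (ξ 2 * (ξ 1 * (ξ 0)))) := by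
    rw [sub_smul, one_smul]
    nth_rewrite 1 [keycT1]
    module
  have honecT1 : (1 : k) - (0 : k) = 1 := by linear_combination (0 : k) * q1
  rw [honecT1, one_smul] at stpcT1
  have cT1 : ℓ 0 1 • (ξ 0 * (ξ 2 * (ξ 3 * (ξ 1)))) = (1 : k) • (ξ 3 * (ξ 2 * (ξ 1 * (ξ 0)))) := by
    rw [stpcT1, smul_add, smul_smul, smul_smul, mul_comm (ℓ 0 1) ((1 : k) * p 0 2 * p 1 3 + (-1 : k) * ℓ 0 1 ^ 2 * ℓ 0 3 ^ 2), mul_smul, cW4, smul_smul, ← add_smul]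
    have hco : ((1 : k) * p 0 2 * p 1 3 + (-1 : k) * ℓ 0 1 ^ 2 * ℓ 0 3 ^ 2) * (-1 : k) + ℓ 0 1 * (0 : k) = (1 : k) := by linear_combination ((-1 : k)) * q2
    rw [hco]
  have keycT3 : ξ 2 * (ξ 0 * (ξ 1 * (ξ 3))) = (0 : k) • (ξ 2 * (ξ 0 * (ξ 1 * (ξ 3)))) + ((1 : k) * p 0 2 * p 1 3 + (-1 : k) * ℓ 0 1 ^ 2 * ℓ 0 3 ^ 2) • (ξ 2 * (ξ 3 * (ξ 1 * (ξ 0)))) := by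
    conv_lhs => rw [r13]
    try simp only [mul_sub, mul_neg, mul_smul_comm, smul_sub, smul_neg, smul_smul, sq, gsq, mul_zero, smul_zero, neg_zero, sub_zero, zero_sub, add_zero, zero_add, neg_neg]
    conv_lhs => rw [g03 (ξ 1)]
    try simp only [mul_sub, mul_neg, mul_smul_comm, smul_sub, smul_neg, smul_smul, sq, gsq, mul_zero, smul_zero, neg_zero, sub_zero, zero_sub, add_zero, zero_add, neg_neg]
    conv_lhs => rw [r01]
    try simp only [mul_sub, mul_neg, mul_smul_comm, smul_sub, smul_neg, smul_smul, sq, gsq, mul_zero, smul_zero, neg_zero, sub_zero, zero_sub, add_zero, zero_add, neg_neg]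
    conv_lhs => rw [g02 (ξ 0)]
    try simp only [mul_sub, mul_neg, mul_smul_comm, smul_sub, smul_neg, smul_smul, sq, gsq, mul_zero, smul_zero, neg_zero, sub_zero, zero_sub, add_zero, zero_add, neg_neg]
    module
  have stpcT3 : ((1 : k) - (0 : k)) • (ξ 2 * (ξ 0 * (ξ 1 * (ξ 3)))) = ((1 : k) * p 0 2 * p 1 3 + (-1 : k) * ℓ 0 1 ^ 2 * ℓ 0 3 ^ 2) • (ξ 2 * (ξ 3 * (ξ 1 * (ξ 0)))) + (0 : k) • (ξ 3 * (ξ 2 * (ξ 1 * (ξ 0)))) := by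
    rw [sub_smul, one_smul]
    nth_rewrite 1 [keycT3]
    module
  have honecT3 : (1 : k) - (0 : k) = 1 := by linear_combination (0 : k) * q1
  rw [honecT3, one_smul] at stpcT3
  have cT3 : ℓ 0 1 • (ξ 2 * (ξ 0 * (ξ 1 * (ξ 3)))) = (1 : k) • (ξ 3 * (ξ 2 * (ξ 1 * (ξ 0)))) := by
    rw [stpcT3, smul_add, smul_smul, smul_smul, mul_comm (ℓ 0 1) ((1 : k) * p 0 2 * p 1 3 + (-1 : k) * ℓ 0 1 ^ 2 * ℓ 0 3 ^ 2), mul_smul, cW2, smul_smul, ← add_smul]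
    have hco : ((1 : k) * p 0 2 * p 1 3 + (-1 : k) * ℓ 0 1 ^ 2 * ℓ 0 3 ^ 2) * (-1 : k) + ℓ 0 1 * (0 : k) = (1 : k) := by linear_combination ((-1 : k)) * q2
    rw [hco]
  intro ν
  fin_cases ν
  · refine ⟨?_, ?_, ?_⟩
    · show ξ 0 * (ξ 1 * ξ 3 * ξ 2) = ξ 0 * ξ 1 * ξ 3 * ξ 2
      simp only [mul_assoc]
    · show (ξ 1 * ξ 3 * ξ 2) * ξ 0 = -(ξ 0 * ξ 1 * ξ 3 * ξ 2)
      simp only [mul_assoc]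
      refine hcl (ℓ 0 1) h01 _ _ ?_
      rw [cW1, smul_neg, cO]
      module
    · show (ξ 1 * ξ 3 * ξ 2) * ξ 0 = -(ξ 0 * (ξ 1 * ξ 3 * ξ 2))
      simp only [mul_assoc]
      refine hcl (ℓ 0 1) h01 _ _ ?_
      rw [cW1, smul_neg, cO]
      module
  · refine ⟨?_, ?_, ?_⟩
    · show ξ 1 * (ξ 0 * ξ 2 * ξ 3) = ξ 0 * ξ 1 * ξ 3 * ξ 2
      simp only [mul_assoc]
      refine hcl (ℓ 0 1) h01 _ _ ?_
      rw [cX1, cO]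
    · show (ξ 0 * ξ 2 * ξ 3) * ξ 1 = -(ξ 0 * ξ 1 * ξ 3 * ξ 2)
      simp only [mul_assoc]
      refine hcl (ℓ 0 1) h01 _ _ ?_
      rw [cT1, smul_neg, cO]
      module
    · show (ξ 0 * ξ 2 * ξ 3) * ξ 1 = -(ξ 1 * (ξ 0 * ξ 2 * ξ 3))
      simp only [mul_assoc]
      refine hcl (ℓ 0 1) h01 _ _ ?_
      rw [cT1, smul_neg, cX1]
      module
  · refine ⟨?_, ?_, ?_⟩
    · show ξ 2 * (ξ 3 * ξ 1 * ξ 0) = ξ 0 * ξ 1 * ξ 3 * ξ 2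
      simp only [mul_assoc]
      refine hcl (ℓ 0 1) h01 _ _ ?_
      rw [cW2, cO]
    · show (ξ 3 * ξ 1 * ξ 0) * ξ 2 = -(ξ 0 * ξ 1 * ξ 3 * ξ 2)
      simp only [mul_assoc]
      refine hcl (ℓ 0 1) h01 _ _ ?_
      rw [cW3, smul_neg, cO]
      module
    · show (ξ 3 * ξ 1 * ξ 0) * ξ 2 = -(ξ 2 * (ξ 3 * ξ 1 * ξ 0))
      simp only [mul_assoc]
      refine hcl (ℓ 0 1) h01 _ _ ?_
      rw [cW3, smul_neg, cW2]
      module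
  · refine ⟨?_, ?_, ?_⟩
    · show ξ 3 * (ξ 2 * ξ 0 * ξ 1) = ξ 0 * ξ 1 * ξ 3 * ξ 2
      simp only [mul_assoc]
      refine hcl (ℓ 0 1) h01 _ _ ?_
      rw [cW4, cO]
    · show (ξ 2 * ξ 0 * ξ 1) * ξ 3 = -(ξ 0 * ξ 1 * ξ 3 * ξ 2)
      simp only [mul_assoc]
      refine hcl (ℓ 0 1) h01 _ _ ?_
      rw [cT3, smul_neg, cO]
      module
    · show (ξ 2 * ξ 0 * ξ 1) * ξ 3 = -(ξ 3 * (ξ 2 * ξ 0 * ξ 1))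
      simp only [mul_assoc]
      refine hcl (ℓ 0 1) h01 _ _ ?_
      rw [cT3, smul_neg, cW4]
      module
end

section
/- The multilinear form W is pre-regular: (I) it is cyclic up to sign, W_{σαβρ} = −W_{αβρσ} for all α,β,ρ,σ ∈ {0,1,2,3}; and (II) it is 1-site non-degenerate provided ℓ₀₁ ≠ 0 and ℓ₀₃ ≠ 0: if v = (v₀,v₁,v₂,v₃) ∈ k⁴ satisfies Σ_α v_α W_{αβρσ} = 0 for all β,ρ,σ ∈ {0,1,2,3}, then v = 0. -/
/-- The sign of an integer, valued in `{-1, 0, 1}`. -/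
def sgnZ (n : ℤ) : ℤ := if 0 < n then 1 else if n < 0 then -1 else 0

/-- The totally antisymmetric symbol `ε_{αβρσ}` with `ε_{0123} = 1`. -/
def eps4 (α β ρ σ : Fin 4) : ℤ :=
  sgnZ ((β.val : ℤ) - α.val) * sgnZ ((ρ.val : ℤ) - α.val) *
    sgnZ ((σ.val : ℤ) - α.val) * sgnZ ((ρ.val : ℤ) - β.val) *
    sgnZ ((σ.val : ℤ) - β.val) * sgnZ ((σ.val : ℤ) - ρ.val)

/-- The tensor `L_{αβρσ}`: equal to `1`, `ℓ₀₁` or `ℓ₀₁ℓ₀₃` on the listed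
quadruples of pairwise distinct indices, and `0` otherwise. -/
def Lform {k : Type*} [Field k] (l1 l3 : k) (α β ρ σ : Fin 4) : k :=
  if (α,β,ρ,σ) = (0,1,3,2) ∨ (α,β,ρ,σ) = (2,0,1,3) ∨ (α,β,ρ,σ) = (3,2,0,1) ∨
     (α,β,ρ,σ) = (1,3,2,0) ∨ (α,β,ρ,σ) = (1,0,2,3) ∨ (α,β,ρ,σ) = (3,1,0,2) ∨
     (α,β,ρ,σ) = (2,3,1,0) ∨ (α,β,ρ,σ) = (0,2,3,1) then 1
  else if (α,β,ρ,σ) = (0,1,2,3) ∨ (α,β,ρ,σ) = (3,0,1,2) ∨ (α,β,ρ,σ) = (2,3,0,1) ∨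
     (α,β,ρ,σ) = (1,2,3,0) ∨ (α,β,ρ,σ) = (1,0,3,2) ∨ (α,β,ρ,σ) = (0,3,2,1) ∨
     (α,β,ρ,σ) = (3,2,1,0) ∨ (α,β,ρ,σ) = (2,1,0,3) then l1
  else if (α,β,ρ,σ) = (0,3,1,2) ∨ (α,β,ρ,σ) = (2,0,3,1) ∨ (α,β,ρ,σ) = (1,2,0,3) ∨
     (α,β,ρ,σ) = (3,1,2,0) ∨ (α,β,ρ,σ) = (3,0,2,1) ∨ (α,β,ρ,σ) = (1,3,0,2) ∨
     (α,β,ρ,σ) = (2,1,3,0) ∨ (α,β,ρ,σ) = (0,2,1,3) then l1 * l3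
  else 0

/-- The tensor `P_{αβ}`: `P₀₁ = p₃₂`, `P₀₂ = p₃₁`, `P₀₃ = ℓ₀₁p₂₁`,
`P₁₂ = ℓ₀₁p₃₀`, `P₁₃ = p₂₀`, `P₂₃ = p₁₀`, `P_{βα} = −P_{αβ}`, `P_{αα} = 0`. -/
def Pform {k : Type*} [Field k] (ℓ p : Fin 4 → Fin 4 → k) : Fin 4 → Fin 4 → k :=
  ![![0, p 3 2, p 3 1, ℓ 0 1 * p 2 1],
    ![-(p 3 2), 0, ℓ 0 1 * p 3 0, p 2 0],
    ![-(p 3 1), -(ℓ 0 1 * p 3 0), 0, p 1 0],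
    ![-(ℓ 0 1 * p 2 1), -(p 2 0), -(p 1 0), 0]]

/-- The multilinear form
`W_{αβρσ} := L_{αβρσ} ε_{αβρσ} + P_{αβ} δ_{αρ} δ_{βσ} ε_{αβα'β'}`. -/
def Wform {k : Type*} [Field k] (ℓ p : Fin 4 → Fin 4 → k)
    (α β ρ σ : Fin 4) : k :=
  Lform (ℓ 0 1) (ℓ 0 3) α β ρ σ * (eps4 α β ρ σ : ℤ) +
    Pform ℓ p α β * (if α = ρ then 1 else 0) * (if β = σ then 1 else 0) *
      (eps4 α β (pr α β).1 (pr α β).2 : ℤ)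

lemma fv0 : ((0:Fin 4):ℕ) = 0 := rfl
lemma fv1 : ((1:Fin 4):ℕ) = 1 := rfl
lemma fv2 : ((2:Fin 4):ℕ) = 2 := rfl
lemma fv3 : ((3:Fin 4):ℕ) = 3 := rfl

set_option maxHeartbeats 2000000 in
/-- Lemma 3.2: `W` is pre-regular: (I) `W_{σαβρ} = −W_{αβρσ}`;
(II) provided `ℓ₀₁ ≠ 0` and `ℓ₀₃ ≠ 0`, if `Σ_α v_α W_{αβρσ} = 0` for all
`β,ρ,σ` then `v = 0`. -/
theorem stmt14 {k : Type*} [Field k] [CharZero k]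
    (ℓ p : Fin 4 → Fin 4 → k) (hlp : GoodParams ℓ p) :
    (∀ α β ρ σ : Fin 4, Wform ℓ p σ α β ρ = - Wform ℓ p α β ρ σ) ∧
    (ℓ 0 1 ≠ 0 → ℓ 0 3 ≠ 0 → ∀ v : Fin 4 → k,
      (∀ β ρ σ : Fin 4, ∑ α : Fin 4, v α * Wform ℓ p α β ρ σ = 0) → v = 0) := by
  constructor
  · intro α β ρ σ
    fin_cases α <;> fin_cases β <;> fin_cases ρ <;> fin_cases σ <;>
      simp (config := { decide := true }) [Wform, Lform, Pform, eps4, sgnZ, pr]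
  · intro _ _ v hv
    have e0 := hv 1 3 2
    have e1 := hv 0 2 3
    have e2 := hv 3 1 0
    have e3 := hv 2 0 1
    simp (config := { decide := true }) [Fin.sum_univ_four, Wform, Lform, Pform,
      eps4, sgnZ, pr] at e0 e1 e2 e3
    funext i
    fin_cases i <;> simp [e0, e1, e2, e3]
end

section
/- Assume ℓ₀₁ ≠ 0, ℓ₀₃ ≠ 0 and ℓ₀₂ = ℓ₀₁ ℓ₀₃. Let A be a unital associative k-algebra and x : {0,1,2,3} → A. Then Σ_{ρ,σ} W_{αβρσ} x_ρ x_σ = 0 for all α,β ∈ {0,1,2,3} if and only if x satisfies the A_{ℓ,p}-relations. -/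
/-!
For every pair `(α, β)` the contraction `Σ_{ρ,σ} W_{αβρσ} x_ρ x_σ` is a unit multiple
(`±1` or `±ℓ₀₁`) of the defect `x_μ x_ν - ℓ_{μν} x_ν x_μ - p_{μν} x_{ν'} x_{μ'}` of one single
relation, namely the one with `(μ, ν) = (β', α')`. Since `(α, β) ↦ (β', α')` is a bijection,
all contractions vanish iff all defects do. The computation only needs that the symmetries of
`ℓ` together with `ℓ₀₂ = ℓ₀₁ ℓ₀₃` determine `ℓ` from `ℓ₀₁, ℓ₀₃`, and that `p` is
antisymmetric, hence zero on the diagonal in characteristic zero.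
-/

section AlpRelations

variable {k A : Type*} [Field k] [Ring A] [Algebra k A]

def alpDefect (ℓ p : Fin 4 → Fin 4 → k) (x : Fin 4 → A) (μ ν : Fin 4) : A :=
  x μ * x ν - ℓ μ ν • (x ν * x μ) - p μ ν • (x (pr μ ν).2 * x (pr μ ν).1)

theorem alpRel_iff_alpDefect_eq_zero (ℓ p : Fin 4 → Fin 4 → k) (x : Fin 4 → A) :
    AlpRel ℓ p x ↔ ∀ μ ν, alpDefect ℓ p x μ ν = 0 := by
  simp only [AlpRel, alpDefect, sub_sub, sub_eq_zero]

theorem pr_pr_swap (μ ν : Fin 4) : pr (pr ν μ).2 (pr ν μ).1 = (μ, ν) := by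
  revert μ ν; decide

theorem forall_pr_swap_iff {P : Fin 4 → Fin 4 → Prop} :
    (∀ α β, P (pr β α).1 (pr β α).2) ↔ ∀ μ ν, P μ ν := by
  refine ⟨fun h μ ν => ?_, fun h α β => h _ _⟩
  simpa [pr_pr_swap] using h (pr ν μ).1 (pr ν μ).2

def ellOf (a b : k) : Fin 4 → Fin 4 → k :=
  ![![1, a, a * b, b],
    ![a, 1, b, a * b],
    ![a * b, b, 1, a],
    ![b, a * b, a, 1]]

theorem eq_ellOf {ℓ : Fin 4 → Fin 4 → k} (hd : ∀ μ, ℓ μ μ = 1) (hs : ∀ μ ν, ℓ μ ν = ℓ ν μ)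
    (hpr : ∀ μ ν, ℓ (pr μ ν).1 (pr μ ν).2 = ℓ μ ν) (h02 : ℓ 0 2 = ℓ 0 1 * ℓ 0 3) :
    ℓ = ellOf (ℓ 0 1) (ℓ 0 3) := by
  have h23 : ℓ 2 3 = ℓ 0 1 := hpr 0 1
  have h13 : ℓ 1 3 = ℓ 0 2 := hpr 0 2
  have h12 : ℓ 1 2 = ℓ 0 3 := hpr 0 3
  funext μ ν
  fin_cases μ <;> fin_cases ν <;> simp [ellOf, hs 1 0, hs 2 0, hs 3 0, hs 2 1, hs 3 1, hs 3 2, *]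

theorem diag_eq_zero_of_antisymm [CharZero k] {ι : Type*} {p : ι → ι → k}
    (hp : ∀ μ ν, p μ ν = -p ν μ) (μ : ι) : p μ μ = 0 :=
  CharZero.eq_neg_self_iff.mp (hp μ μ)

def wformCoeff (a : k) : Fin 4 → Fin 4 → k :=
  ![![1, -1, 1, -a], ![-1, 1, -a, 1], ![1, -a, 1, -1], ![-a, 1, -1, 1]]

theorem wformCoeff_ne_zero {a : k} (ha : a ≠ 0) (α β : Fin 4) : wformCoeff a α β ≠ 0 := by
  fin_cases α <;> fin_cases β <;> simp [wformCoeff, ha]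

set_option maxHeartbeats 800000 in
theorem sum_Wform_smul_eq_smul_alpDefect {p : Fin 4 → Fin 4 → k} (hp : ∀ μ ν, p μ ν = -p ν μ)
    (hpd : ∀ μ, p μ μ = 0) (a b : k) (x : Fin 4 → A) (α β : Fin 4) :
    ∑ ρ, ∑ σ, Wform (ellOf a b) p α β ρ σ • (x ρ * x σ) =
      wformCoeff a α β • alpDefect (ellOf a b) p x (pr β α).1 (pr β α).2 := by
  fin_cases α <;> fin_cases β <;>
    · simp only [Fin.sum_univ_four, Wform, Lform, Pform, eps4, sgnZ, pr, alpDefect, wformCoeff]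
      norm_num [Fin.ext_iff]
      simp only [ellOf, hpd, hp 0 1, hp 0 2, hp 0 3, hp 1 2, hp 1 3, hp 2 3, Matrix.cons_val,
        Matrix.cons_val_zero, Matrix.cons_val_one]
      module

end AlpRelations

theorem stmt15_general {k A : Type*} [Field k] [CharZero k] [Ring A] [Algebra k A]
    (ℓ p : Fin 4 → Fin 4 → k) (hlp : GoodParams ℓ p)
    (h01 : ℓ 0 1 ≠ 0) (h02 : ℓ 0 2 = ℓ 0 1 * ℓ 0 3)
    (x : Fin 4 → A) :
    (∀ α β : Fin 4,
      ∑ ρ : Fin 4, ∑ σ : Fin 4, Wform ℓ p α β ρ σ • (x ρ * x σ) = 0) ↔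
      AlpRel ℓ p x := by
  obtain ⟨hd, hs, hpr, hp, -⟩ := hlp
  rw [alpRel_iff_alpDefect_eq_zero, eq_ellOf hd hs hpr h02]
  simp only [sum_Wform_smul_eq_smul_alpDefect hp (diag_eq_zero_of_antisymm hp), smul_eq_zero,
    wformCoeff_ne_zero h01, false_or]
  exact forall_pr_swap_iff (P := fun μ ν => alpDefect _ p x μ ν = 0)

/-- Lemma 3.3: under `ℓ₀₁ ≠ 0`, `ℓ₀₃ ≠ 0`, `ℓ₀₂ = ℓ₀₁ℓ₀₃`:
`Σ_{ρ,σ} W_{αβρσ} x_ρ x_σ = 0` for all `α,β` iff `x` satisfies the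
`A_{ℓ,p}`-relations. -/
theorem stmt15 {k A : Type*} [Field k] [CharZero k] [Ring A] [Algebra k A]
    (ℓ p : Fin 4 → Fin 4 → k) (hlp : GoodParams ℓ p)
    (h01 : ℓ 0 1 ≠ 0) (h03 : ℓ 0 3 ≠ 0) (h02 : ℓ 0 2 = ℓ 0 1 * ℓ 0 3)
    (x : Fin 4 → A) :
    (∀ α β : Fin 4,
      ∑ ρ : Fin 4, ∑ σ : Fin 4, Wform ℓ p α β ρ σ • (x ρ * x σ) = 0) ↔
      AlpRel ℓ p x :=
  stmt15_general ℓ p hlp h01 h02 x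
end

section
/- Let A be a unital associative k-algebra and M : {0,1,2,3}×{0,1,2,3} → A. Then M satisfies the M_{ℓ,p}-relations if and only if for all μ,ν,α,β ∈ {0,1,2,3} (with (μ',ν') = (μ,ν)' and (α',β') = (α,β)') the following relation holds: ℓ_{αβ} M_{μα} M_{νβ} + p_{α'β'} M_{μα'} M_{νβ'} = ℓ_{μν} M_{νβ} M_{μα} + p_{μν} M_{ν'β} M_{μ'α}. -/
/-- `M` satisfies the `M_{ℓ,p}`-relations:
`M_{μα} M_{νβ} = ℓ_{μν} ℓ_{βα} M_{νβ} M_{μα} + p_{μν} ℓ_{βα} M_{ν'β} M_{μ'α}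
+ ℓ_{μν} p_{β'α'} M_{νβ'} M_{μα'} + p_{μν} p_{β'α'} M_{ν'β'} M_{μ'α'}`. -/
def MlpRel {k A : Type*} [Field k] [Ring A] [Algebra k A]
    (ℓ p : Fin 4 → Fin 4 → k) (M : Fin 4 → Fin 4 → A) : Prop :=
  ∀ μ ν α β : Fin 4,
    M μ α * M ν β =
      (ℓ μ ν * ℓ β α) • (M ν β * M μ α) +
      (p μ ν * ℓ β α) • (M (pr μ ν).2 β * M (pr μ ν).1 α) +
      (ℓ μ ν * p (pr α β).2 (pr α β).1) • (M ν (pr α β).2 * M μ (pr α β).1) +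
      (p μ ν * p (pr α β).2 (pr α β).1) •
        (M (pr μ ν).2 (pr α β).2 * M (pr μ ν).1 (pr α β).1)

/-- Proposition 5.3: `M` satisfies the `M_{ℓ,p}`-relations iff
`ℓ_{αβ} M_{μα} M_{νβ} + p_{α'β'} M_{μα'} M_{νβ'}
= ℓ_{μν} M_{νβ} M_{μα} + p_{μν} M_{ν'β} M_{μ'α}` for all `μ,ν,α,β`. -/
theorem stmt16 {k A : Type*} [Field k] [CharZero k] [Ring A] [Algebra k A]
    (ℓ p : Fin 4 → Fin 4 → k) (hlp : GoodParams ℓ p)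
    (M : Fin 4 → Fin 4 → A) :
    MlpRel ℓ p M ↔
      ∀ μ ν α β : Fin 4,
        ℓ α β • (M μ α * M ν β) +
          p (pr α β).1 (pr α β).2 • (M μ (pr α β).1 * M ν (pr α β).2) =
        ℓ μ ν • (M ν β * M μ α) +
          p μ ν • (M (pr μ ν).2 β * M (pr μ ν).1 α) := by
  obtain ⟨h1, h2, h3, h4, h5⟩ := hlp
  have hinv : ∀ a b : Fin 4, pr (pr a b).1 (pr a b).2 = (a, b) := by decide
  constructor
  · intro h μ ν α β
    have e1 := h μ ν α β
    have e2 := h μ ν (pr α β).1 (pr α β).2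
    rw [hinv] at e2
    have f1 : ℓ β α = ℓ α β := h2 β α
    have f2 : ℓ (pr α β).1 (pr α β).2 = ℓ α β := h3 α β
    have f3 : ℓ (pr α β).2 (pr α β).1 = ℓ α β := by rw [h2]; exact f2
    have f4 : p β α = - p α β := h4 β α
    have f5 : p (pr α β).2 (pr α β).1 = - p (pr α β).1 (pr α β).2 :=
      h4 (pr α β).2 (pr α β).1
    have f6 : ℓ α β ^ 2 - p α β * p (pr α β).1 (pr α β).2 = 1 := by
      rw [← h5 α β, f5]; ring
    rw [e1, e2]
    simp only [f1, f2, f3, f4, f5]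
    match_scalars
    · linear_combination (ℓ μ ν) * f6
    · linear_combination (p μ ν) * f6
    · ring
    · ring
  · intro h μ ν α β
    have e1 := h μ ν α β
    have e2 := h μ ν (pr α β).1 (pr α β).2
    rw [hinv] at e2
    have f2 : ℓ (pr α β).1 (pr α β).2 = ℓ α β := h3 α β
    have f5 : p (pr α β).2 (pr α β).1 = - p (pr α β).1 (pr α β).2 :=
      h4 (pr α β).2 (pr α β).1
    have f6 : ℓ α β ^ 2 - p (pr α β).1 (pr α β).2 * p α β = 1 := by
      rw [← h5 α β, f5]; ring
    rw [f2] at e2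
    simp only [Prod.fst, Prod.snd] at e2
    have f1 : ℓ β α = ℓ α β := h2 β α
    have step : M μ α * M ν β =
        ℓ α β • (ℓ α β • (M μ α * M ν β) +
          p (pr α β).1 (pr α β).2 • (M μ (pr α β).1 * M ν (pr α β).2)) -
        p (pr α β).1 (pr α β).2 • (ℓ α β • (M μ (pr α β).1 * M ν (pr α β).2) +
          p α β • (M μ α * M ν β)) := by
      match_scalars
      · linear_combination -f6
      · ring
    rw [step, e1, e2, f1, f5]
    match_scalars <;> ring
end
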